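/- arXiv:1905.07223 — 9 statements merged into one kernel-verified Lean document; each statement's English description precedes it below -/
import Mathlib

section
/- If u and v are nonempty words and some power u^m of u and some power v^n of v have a common factor of length |u|+|v|, then u and v have conjugate primitive roots (equivalently, the same Lyndon root). -/
/-- `npow w n` is the word `w` repeated `n` times. -/
def npow {α : Type*} (w : List α) : ℕ → List α
  | 0 => []
  | n + 1 => w ++ npow w n

/-- `occ w x` is the number of occurrences of `x` as a factor of `w`,
i.e. the number of factorizations `w = s ++ x ++ t`. -/
def occ {α : Type*} [DecidableEq α] (w x : List α) : ℕ :=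
  ((List.range (w.length + 1)).filter (fun i => x <+: w.drop i)).length

/-- A nonempty word is primitive if it is not a power of a shorter word. -/
def Primitive {α : Type*} (p : List α) : Prop :=
  p ≠ [] ∧ ∀ (q : List α) (n : ℕ), p = npow q n → q = p

/-- `u` and `v` are `k`-abelian equivalent. -/
def KAbEq {α : Type*} [DecidableEq α] (k : ℕ) (u v : List α) : Prop :=
  ∀ x : List α, x.length ≤ k → occ u x = occ v x

/-- `X` is a separating set of factors of `L`. -/
def IsSSF {α : Type*} [DecidableEq α] (X L : Set (List α)) : Prop :=
  ∀ u ∈ L, ∀ v ∈ L, u ≠ v → ∃ x ∈ X, occ u x ≠ occ v x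

/-- `L` has a finite separating set of factors. -/
def HasFiniteSSF {α : Type*} [DecidableEq α] (L : Set (List α)) : Prop :=
  ∃ X : Set (List α), X.Finite ∧ IsSSF X L

namespace NP
variable {α : Type*}

@[simp] lemma np_zero (w : List α) : npow w 0 = [] := rfl
@[simp] lemma np_succ (w : List α) (n : ℕ) : npow w (n+1) = w ++ npow w n := rfl

@[simp] lemma np_length (w : List α) (n : ℕ) : (npow w n).length = n * w.length := by
  induction n with
  | zero => simp
  | succ k ih => simp [ih, Nat.succ_mul, Nat.add_comm]

lemma np_add (w : List α) (m n : ℕ) : npow w (m + n) = npow w m ++ npow w n := by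
  induction m with
  | zero => simp
  | succ k ih => rw [Nat.succ_add]; simp [ih]

lemma np_comm (w : List α) (n : ℕ) : npow w n ++ w = w ++ npow w n := by
  have h1 := np_add w n 1
  have h2 := np_add w 1 n
  rw [Nat.add_comm 1 n] at h2
  rw [h2] at h1
  simpa using h1.symm

@[simp] lemma np_one (w : List α) : npow w 1 = w := by simp

lemma np_mul (w : List α) (d n : ℕ) : npow (npow w d) n = npow w (d * n) := by
  induction n with
  | zero => simp
  | succ k ih => rw [np_succ, ih, ← np_add]; ring_nf

lemma np_ne_nil {w : List α} (hw : w ≠ []) {n : ℕ} (hn : 1 ≤ n) : npow w n ≠ [] := by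
  obtain ⟨k, rfl⟩ := Nat.exists_eq_add_of_le hn
  simp [np_add, hw]

/-- key rotation identity -/
lemma drop_npow_append_take (p : List α) {s k : ℕ} (hs : s ≤ p.length) (hk : 1 ≤ k) :
    (npow p k).drop s ++ p.take s = npow (p.rotate s) k := by
  obtain ⟨j, rfl⟩ := Nat.exists_eq_add_of_le hk
  clear hk
  induction j with
  | zero =>
    simp only [np_succ, np_zero, List.append_nil]
    rw [List.rotate_eq_drop_append_take hs]
  | succ j ih =>
    have h1 : npow p (1 + (j+1)) = p ++ npow p (1 + j) := by
      rw [Nat.add_comm 1 (j+1)]; rw [np_succ, Nat.add_comm 1 j]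
    rw [h1, List.drop_append_of_le_length hs]
    have h1' : npow (p.rotate s) (1 + (j+1)) = p.rotate s ++ npow (p.rotate s) (1 + j) := by
      rw [Nat.add_comm 1 (j+1), np_succ, Nat.add_comm 1 j]
    rw [h1']
    have h2 : npow p (1 + j) = p.take s ++ ((npow p (1+j)).drop s) := by
      have : p.take s = (npow p (1+j)).take s := by
        rw [Nat.add_comm, np_succ, List.take_append_of_le_length hs]
      rw [this, List.take_append_drop]
    rw [← ih, List.rotate_eq_drop_append_take hs]
    conv_lhs => rw [h2]
    simp [List.append_assoc]

lemma take_npow (p : List α) {s k : ℕ} (hs : s ≤ p.length) (hk : 1 ≤ k) :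
    (npow p k).take s = p.take s := by
  obtain ⟨j, rfl⟩ := Nat.exists_eq_add_of_le hk
  rw [Nat.add_comm, np_succ, List.take_append_of_le_length hs]

lemma rotate_npow (p : List α) {s k : ℕ} (hs : s ≤ p.length) (hk : 1 ≤ k) :
    (npow p k).rotate s = npow (p.rotate s) k := by
  have hs' : s ≤ (npow p k).length := by
    rw [np_length]; exact le_trans hs (Nat.le_mul_of_pos_left _ hk)
  rw [List.rotate_eq_drop_append_take hs', take_npow p hs hk, drop_npow_append_take p hs hk]

lemma rotate_npow_len (p : List α) {k : ℕ} (hk : 1 ≤ k) :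
    (npow p k).rotate p.length = npow p k := by
  rw [rotate_npow p le_rfl hk, List.rotate_length]

lemma rotate_npow_mod (p : List α) (hp : p ≠ []) {k : ℕ} (hk : 1 ≤ k) (t : ℕ) :
    (npow p k).rotate t = npow (p.rotate (t % p.length)) k := by
  have hlp : 0 < p.length := List.length_pos_iff.mpr hp
  have hred : ∀ q r, (npow p k).rotate (q * p.length + r) = (npow p k).rotate r := by
    intro q r
    induction q with
    | zero => simp
    | succ j ih =>
      have : (j+1) * p.length + r = p.length + (j * p.length + r) := by ring
      rw [this, ← List.rotate_rotate, rotate_npow_len p hk, ih]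
  have := hred (t / p.length) (t % p.length)
  rw [Nat.mul_comm, Nat.div_add_mod] at this
  rw [this, rotate_npow p (le_of_lt (Nat.mod_lt _ hlp)) hk]

end NP

namespace NP2
open NP
variable {α : Type*}

lemma np_nil (n : ℕ) : npow ([] : List α) n = [] := by
  induction n with
  | zero => rfl
  | succ k ih => simp [ih]

lemma nil_of_np_nil {w : List α} {n : ℕ} (h : npow w n = []) (hn : 1 ≤ n) : w = [] := by
  by_contra hw
  exact np_ne_nil hw hn h

lemma pos_of_np_ne_nil {w : List α} {n : ℕ} (h : npow w n ≠ []) : 1 ≤ n := by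
  rcases n with _ | k
  · exact absurd rfl h
  · omega

lemma ne_nil_of_npow {w : List α} {n : ℕ} {x : List α} (hx : x ≠ []) (h : npow w n = x) :
    w ≠ [] ∧ 1 ≤ n := by
  have hn : 1 ≤ n := pos_of_np_ne_nil (h ▸ hx)
  refine ⟨fun h0 => hx ?_, hn⟩
  rw [← h, h0, np_nil]

/-- primitive root existence -/
lemma exists_primitive_root : ∀ (N : ℕ) (w : List α), w.length ≤ N → w ≠ [] →
    ∃ p k, Primitive p ∧ 1 ≤ k ∧ npow p k = w := by
  intro N
  induction N with
  | zero => intro w hw hne; simp [List.length_eq_zero_iff.mp (Nat.le_zero.mp hw)] at hne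
  | succ N ih =>
    intro w hw hne
    by_cases hprim : Primitive w
    · exact ⟨w, 1, hprim, le_rfl, np_one w⟩
    · rw [Primitive, not_and_or] at hprim
      rcases hprim with h | h
      · exact absurd (not_not.mp h) hne
      push_neg at h
      obtain ⟨q, n, hqn, hne2⟩ := h
      obtain ⟨hq, hn⟩ := ne_nil_of_npow hne hqn.symm
      have hn2 : 2 ≤ n := by
        rcases Nat.lt_or_ge n 2 with h2 | h2
        · interval_cases n
          · exact absurd (hqn.trans (np_one q)).symm hne2
        · exact h2
      have hlq : 0 < q.length := List.length_pos_iff.mpr hq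
      have hlw : w.length = n * q.length := by rw [hqn, np_length]
      have hql : q.length ≤ N := by nlinarith
      obtain ⟨p, k, hp, hk, hpk⟩ := ih q hql hq
      refine ⟨p, k * n, hp, Nat.one_le_iff_ne_zero.mpr (by positivity), ?_⟩
      rw [← np_mul, hpk, ← hqn]

/-- commuting words are powers of a common word -/
lemma comm_common_power : ∀ (N : ℕ) (x y : List α), x.length + y.length ≤ N → x ≠ [] → y ≠ [] →
    x ++ y = y ++ x → ∃ w k l, 1 ≤ k ∧ 1 ≤ l ∧ npow w k = x ∧ npow w l = y := by
  intro N
  induction N with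
  | zero =>
    intro x y hlen hx _ _
    have := List.length_pos_iff.mpr hx
    omega
  | succ N ih =>
    have key : ∀ x y : List α, x ≠ [] → y ≠ [] → x.length ≤ y.length →
        x.length + y.length ≤ N + 1 → x ++ y = y ++ x →
        ∃ w k l, 1 ≤ k ∧ 1 ≤ l ∧ npow w k = x ∧ npow w l = y := by
      intro x y hx hy hle hlen hcomm
      have hxy : x = y.take x.length := by
        have h1 : (x ++ y).take x.length = x := List.take_left
        have h2 : (y ++ x).take x.length = y.take x.length :=
          List.take_append_of_le_length hle
        have h3 := h1.symm
        rw [hcomm, h2] at h3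
        exact h3
      set z := y.drop x.length with hz
      have hyz : y = x ++ z := by rw [hxy, hz, List.take_append_drop]
      by_cases hznil : z = []
      · refine ⟨x, 1, 1, le_rfl, le_rfl, np_one x, ?_⟩
        rw [np_one, hyz, hznil, List.append_nil]
      · have hcomm2 : x ++ z = z ++ x := by
          have : x ++ (x ++ z) = (x ++ z) ++ x := by rw [← hyz]; exact hcomm
          rw [List.append_assoc] at this
          exact List.append_cancel_left this
        have hlx : 0 < x.length := List.length_pos_iff.mpr hx
        have hlz : z.length = y.length - x.length := by rw [hz, List.length_drop]
        have hlen2 : x.length + z.length ≤ N := by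
          have := List.length_pos_iff.mpr hy
          omega
        obtain ⟨w, k, l, hk, hl, hwx, hwz⟩ := ih x z hlen2 hx hznil hcomm2
        refine ⟨w, k, k + l, hk, by omega, hwx, ?_⟩
        rw [np_add, hwx, hwz, ← hyz]
    intro x y hlen hx hy hcomm
    rcases le_or_gt x.length y.length with hle | hlt
    · exact key x y hx hy hle hlen hcomm
    · obtain ⟨w, k, l, hk, hl, hwy, hwx⟩ :=
        key y x hy hx (le_of_lt hlt) (by omega) hcomm.symm
      exact ⟨w, l, k, hl, hk, hwx, hwy⟩

/-- rotations of primitive words are primitive -/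
lemma primitive_rotate {p : List α} (hp : Primitive p) (s : ℕ) : Primitive (p.rotate s) := by
  have hpn : p ≠ [] := hp.1
  have hlp : 0 < p.length := List.length_pos_iff.mpr hpn
  have hrn : p.rotate s ≠ [] := by
    intro h
    exact hpn (List.length_eq_zero_iff.mp (by rw [← List.length_rotate p s, h]; rfl))
  refine ⟨hrn, fun q n hqn => ?_⟩
  obtain ⟨hq, hn⟩ := ne_nil_of_npow hrn hqn.symm
  have hlq : 0 < q.length := List.length_pos_iff.mpr hq
  -- rotate back
  set c := p.length - s % p.length with hc
  have hmod : (s + c) % p.length = 0 := by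
    have h1 : s % p.length < p.length := Nat.mod_lt _ hlp
    have h2 : s % p.length ≤ s := Nat.mod_le _ _
    have h3 : s + c = (s - s % p.length) + p.length := by omega
    obtain ⟨d, hd⟩ : p.length ∣ s - s % p.length := by
      have := Nat.div_add_mod s p.length
      exact ⟨s / p.length, by omega⟩
    rw [h3, hd, ← Nat.mul_succ]
    exact Nat.mul_mod_right _ _
  have hback : (p.rotate s).rotate c = p := by
    rw [List.rotate_rotate, ← List.rotate_mod, hmod, List.rotate_zero]
  have hpe : p = npow (q.rotate (c % q.length)) n := by
    rw [← hback, hqn, rotate_npow_mod q hq hn]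
  have := hp.2 _ n hpe
  have hlen : p.length = n * q.length := by
    have : (p.rotate s).length = (npow q n).length := by rw [hqn]
    rw [List.length_rotate, np_length] at this
    exact this
  have hlen2 : q.length = p.length := by
    rw [← this, List.length_rotate]
  have hn1 : n = 1 := by nlinarith
  rw [hn1, np_one] at hqn
  exact hqn.symm

lemma drop_mul_npow (u : List α) : ∀ (q m : ℕ), q ≤ m →
    (npow u m).drop (q * u.length) = npow u (m - q) := by
  intro q
  induction q with
  | zero => intro m _; simp
  | succ j ih =>
    intro m hm
    obtain ⟨m', rfl⟩ : ∃ m', m = m' + 1 := ⟨m - 1, by omega⟩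
    have h1 : (j+1) * u.length = u.length + j * u.length := by ring
    rw [np_succ, h1, List.drop_length_add_append, ih m' (by omega)]
    congr 1
    omega

/-- infix of a power is a prefix of a power of a rotation -/
lemma infix_npow {u f : List α} {m : ℕ} (hu : u ≠ []) (hfne : f ≠ [])
    (hfu : f <:+: npow u m) :
    ∃ r M, r < u.length ∧ 1 ≤ M ∧ f <+: npow (u.rotate r) M ∧
      (u.rotate r).rotate (u.length - r) = u := by
  have hlu : 0 < u.length := List.length_pos_iff.mpr hu
  obtain ⟨s, t, hst⟩ := hfu
  set i := s.length with hi
  have hdrop : (npow u m).drop i = f ++ t := by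
    rw [← hst, List.append_assoc, hi, List.drop_left]
  set q := i / u.length with hq
  set r := i % u.length with hr
  have hqm : q ≤ m := by
    have h1 : i ≤ m * u.length := by
      have := congrArg List.length hst
      simp [np_length] at this
      omega
    have := Nat.div_le_div_right (c := u.length) h1
    rw [Nat.mul_div_cancel _ hlu] at this
    exact le_trans this (le_refl m)
  have hir : i = q * u.length + r := by
    rw [hq, hr, Nat.mul_comm]
    exact (Nat.div_add_mod i u.length).symm
  have hdrop2 : (npow u (m - q)).drop r = f ++ t := by
    rw [← drop_mul_npow u q m hqm, List.drop_drop, ← hir, hdrop]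
  have hM : 1 ≤ m - q := by
    apply pos_of_np_ne_nil (w := u)
    intro h
    rw [h] at hdrop2
    simp at hdrop2
    exact hfne hdrop2.1
  have hrlt : r < u.length := Nat.mod_lt _ hlu
  refine ⟨r, m - q, hrlt, hM, ?_, ?_⟩
  · refine List.IsPrefix.trans ⟨t, hdrop2.symm⟩ ?_
    exact ⟨u.take r, drop_npow_append_take u (le_of_lt hrlt) hM⟩
  · rw [List.rotate_rotate]
    have : r + (u.length - r) = u.length := by omega
    rw [this, List.rotate_length]

/-- from a prefix of a power, split f -/
lemma prefix_split {x f : List α} {M c : ℕ} (hx : x ≠ []) (hpf : f <+: npow x M)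
    (hlf : f.length = x.length + c) :
    f = x ++ f.take c := by
  have hlx : 0 < x.length := List.length_pos_iff.mpr hx
  obtain ⟨t, ht⟩ := hpf
  have hfl : f ≠ [] := by
    intro h; rw [h] at hlf; simp at hlf; omega
  have hM : 1 ≤ M := by
    apply pos_of_np_ne_nil (w := x)
    intro h
    rw [h] at ht
    simp at ht
    exact hfl ht.1
  obtain ⟨M1, rfl⟩ : ∃ M1, M = M1 + 1 := ⟨M - 1, by omega⟩
  have hMl : x.length + c ≤ (M1 + 1) * x.length := by
    have h0 := congrArg List.length ht
    simp [np_length] at h0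
    have hexp : (M1 + 1) * x.length = M1 * x.length + x.length := by ring
    omega
  have hcM1 : c ≤ M1 * x.length := by
    have : (M1 + 1) * x.length = M1 * x.length + x.length := by ring
    omega
  have hxf : x.length ≤ f.length := by omega
  have hcf : c ≤ f.length := by omega
  have htake : f.take x.length = x := by
    have h1 : (f ++ t).take x.length = f.take x.length :=
      List.take_append_of_le_length hxf
    rw [ht, np_succ, List.take_left] at h1
    exact h1.symm
  have hdropx : f.drop x.length ++ t = npow x M1 := by
    have h1 : (f ++ t).drop x.length = f.drop x.length ++ t :=
      List.drop_append_of_le_length hxf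
    rw [ht, np_succ, List.drop_left] at h1
    exact h1.symm
  have hld : (f.drop x.length).length = c := by
    rw [List.length_drop, hlf]; omega
  have h2 : f.drop x.length = (npow x M1).take c := by
    have h3 : (f.drop x.length ++ t).take c = (f.drop x.length).take c :=
      List.take_append_of_le_length (by omega)
    rw [hdropx] at h3
    rw [h3, List.take_of_length_le (le_of_eq hld)]
  have h4 : f.take c = (npow x M1).take c := by
    have h5 : (f ++ t).take c = f.take c := List.take_append_of_le_length hcf
    have h6 : npow x (M1 + 1) = npow x M1 ++ npow x 1 := np_add x M1 1
    have h7 : (npow x M1 ++ npow x 1).take c = (npow x M1).take c :=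
      List.take_append_of_le_length (by rw [np_length]; exact hcM1)
    rw [ht, h6, h7] at h5
    exact h5.symm
  calc f = f.take x.length ++ f.drop x.length := (List.take_append_drop _ f).symm
    _ = x ++ f.take c := by rw [htake, h2, ← h4]

end NP2

/-- If powers of nonempty words `u` and `v` share a common factor of length
`|u| + |v|`, then `u` and `v` have conjugate primitive roots. -/
theorem stmt0 {α : Type*} [DecidableEq α] (u v : List α) (hu : u ≠ []) (hv : v ≠ [])
    (m n : ℕ) (f : List α) (hf : f.length = u.length + v.length)
    (hfu : f <:+: npow u m) (hfv : f <:+: npow v n) :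
    ∃ p q : List α, Primitive p ∧ Primitive q ∧
      (∃ i ≥ 1, npow p i = u) ∧ (∃ j ≥ 1, npow q j = v) ∧
      ∃ s t : List α, p = s ++ t ∧ q = t ++ s := by
  classical
  have ha : 0 < u.length := List.length_pos_iff.mpr hu
  have hb : 0 < v.length := List.length_pos_iff.mpr hv
  have hfne : f ≠ [] := by
    intro h; rw [h] at hf; simp at hf; omega
  obtain ⟨r1, M, hr1, hM, hpu, hback1⟩ := NP2.infix_npow hu hfne hfu
  obtain ⟨r2, N2, hr2, hN2, hpv, hback2⟩ := NP2.infix_npow hv hfne hfv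
  set u' := u.rotate r1 with hu'
  set v' := v.rotate r2 with hv'
  have hlu' : u'.length = u.length := List.length_rotate u r1
  have hlv' : v'.length = v.length := List.length_rotate v r2
  have hu'ne : u' ≠ [] := by
    intro h; rw [h] at hlu'; simp at hlu'; omega
  have hv'ne : v' ≠ [] := by
    intro h; rw [h] at hlv'; simp at hlv'; omega
  have hsplitu : f = u' ++ f.take v.length :=
    NP2.prefix_split hu'ne hpu (by rw [hf, hlu'])
  have hsplitv : f = v' ++ f.take u.length :=
    NP2.prefix_split hv'ne hpv (by rw [hf, hlv']; omega)
  have htv : f.take v.length = v' := by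
    conv_lhs => rw [hsplitv]
    rw [← hlv', List.take_left]
  have htu : f.take u.length = u' := by
    conv_lhs => rw [hsplitu]
    rw [← hlu', List.take_left]
  have hcomm : u' ++ v' = v' ++ u' := by
    have e1 : f = u' ++ v' := by rw [hsplitu, htv]
    have e2 : f = v' ++ u' := by rw [hsplitv, htu]
    rw [← e1, ← e2]
  obtain ⟨w, k, l, hk, hl, hwu, hwv⟩ :=
    NP2.comm_common_power (u'.length + v'.length) u' v' le_rfl hu'ne hv'ne hcomm
  have hwne : w ≠ [] := (NP2.ne_nil_of_npow hu'ne hwu).1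
  obtain ⟨p0, d, hp0, hd, hp0d⟩ := NP2.exists_primitive_root w.length w le_rfl hwne
  have hp0ne : p0 ≠ [] := hp0.1
  have hlp0 : 0 < p0.length := List.length_pos_iff.mpr hp0ne
  have hu'p : npow p0 (d * k) = u' := by rw [← NP.np_mul, hp0d, hwu]
  have hv'p : npow p0 (d * l) = v' := by rw [← NP.np_mul, hp0d, hwv]
  have hdk : 1 ≤ d * k := Nat.one_le_iff_ne_zero.mpr (Nat.mul_ne_zero (by omega) (by omega))
  have hdl : 1 ≤ d * l := Nat.one_le_iff_ne_zero.mpr (Nat.mul_ne_zero (by omega) (by omega))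
  set s1 := (u.length - r1) % p0.length with hs1
  set s2 := (v.length - r2) % p0.length with hs2
  have hup : npow (p0.rotate s1) (d * k) = u := by
    rw [hs1, ← NP.rotate_npow_mod p0 hp0ne hdk, hu'p]
    exact hback1
  have hvp : npow (p0.rotate s2) (d * l) = v := by
    rw [hs2, ← NP.rotate_npow_mod p0 hp0ne hdl, hv'p]
    exact hback2
  set P := p0.rotate s1 with hP
  set Q := p0.rotate s2 with hQ
  have hPprim : Primitive P := NP2.primitive_rotate hp0 s1
  have hQprim : Primitive Q := NP2.primitive_rotate hp0 s2
  have hs1lt : s1 < p0.length := Nat.mod_lt _ hlp0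
  set t0 := (p0.length + s2) - s1 with ht0
  have hQP : Q = P.rotate t0 := by
    rw [hP, List.rotate_rotate]
    have h1 : s1 + t0 = p0.length + s2 := by omega
    rw [h1, ← List.rotate_rotate, List.rotate_length]
  have hlP : P.length = p0.length := List.length_rotate p0 s1
  set t1 := t0 % P.length with ht1
  have hQP2 : Q = P.rotate t1 := by rw [hQP, ht1, List.rotate_mod]
  have ht1le : t1 ≤ P.length := le_of_lt (Nat.mod_lt _ (by omega))
  refine ⟨P, Q, hPprim, hQprim, ⟨d * k, hdk, hup⟩, ⟨d * l, hdl, hvp⟩,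
    P.take t1, P.drop t1, (List.take_append_drop _ P).symm, ?_⟩
  rw [hQP2, List.rotate_eq_drop_append_take ht1le]
end

section
/- Let w be a word and p a primitive word. If two occurrences of powers of p in w (as factors) overlap in at least |p| positions, then they are both contained in a common occurrence of a power of p in w. Formally: if w = x p^m y = x' p^n y' with m,n ≥ 1 and min(|x p^m|, |x' p^n|) − max(|x|,|x'|) ≥ |p|, then there is an occurrence w = x'' p^k y'' with k ≥ 1 containing both occurrences, i.e., |x''| ≤ min(|x|,|x'|) and |y''| ≤ min(|y|,|y'|). -/
lemma npow_length {α : Type*} (p : List α) (n : ℕ) :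
    (npow p n).length = n * p.length := by
  induction n with
  | zero => simp [npow]
  | succ k ih => simp [npow, ih]; ring

lemma npow_appendPow {α : Type*} (p : List α) (a b : ℕ) :
    npow p (a + b) = npow p a ++ npow p b := by
  induction a with
  | zero => simp [npow]
  | succ k ih => simp [npow]; rw [Nat.succ_add, npow, ih]

lemma comm_lemma {α : Type*} : ∀ (N : ℕ) (u v : List α), u.length + v.length ≤ N →
    u ++ v = v ++ u → ∃ (t : List α) (k l : ℕ), u = npow t k ∧ v = npow t l := by
  intro N
  induction N with
  | zero =>
    intro u v h _
    have hu : u = [] := by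
      have := List.length_eq_zero_iff.mp (by omega : u.length = 0); exact this
    have hv : v = [] := by
      have := List.length_eq_zero_iff.mp (by omega : v.length = 0); exact this
    exact ⟨[], 0, 0, by simp [hu, npow], by simp [hv, npow]⟩
  | succ N ih =>
    intro u v hN h
    rcases eq_or_ne u [] with hu | hu
    · exact ⟨v, 0, 1, by simp [hu, npow], by simp [npow]⟩
    rcases eq_or_ne v [] with hv | hv
    · exact ⟨u, 1, 0, by simp [npow], by simp [hv, npow]⟩
    rcases le_total u.length v.length with hle | hle
    · -- u is a prefix of v
      have hpre : u <+: v := by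
        have : u = v.take u.length := by
          have h1 : (u ++ v).take u.length = u := by simp
          have h2 : (v ++ u).take u.length = v.take u.length :=
            List.take_append_of_le_length hle
          rw [h] at h1; rw [h2] at h1; exact h1.symm
        rw [this]; exact List.take_prefix _ _
      obtain ⟨v', hv'⟩ := hpre
      have hcomm : u ++ v' = v' ++ u := by
        have : u ++ (u ++ v') = (u ++ v') ++ u := by rw [hv']; exact h
        rw [List.append_assoc] at this
        exact List.append_cancel_left this
      have hlen : u.length + v'.length ≤ N := by
        have : v.length = u.length + v'.length := by rw [← hv']; simp
        have hu0 : 0 < u.length := List.length_pos_iff.mpr hu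
        omega
      obtain ⟨t, k, l, ht1, ht2⟩ := ih u v' hlen hcomm
      exact ⟨t, k, k + l, ht1, by rw [← hv', npow_appendPow, ht1, ht2]⟩
    · -- v is a prefix of u
      have hpre : v <+: u := by
        have : v = u.take v.length := by
          have h1 : (v ++ u).take v.length = v := by simp
          have h2 : (u ++ v).take v.length = u.take v.length :=
            List.take_append_of_le_length hle
          rw [← h] at h1; rw [h2] at h1; exact h1.symm
        rw [this]; exact List.take_prefix _ _
      obtain ⟨u', hu'⟩ := hpre
      have hcomm : v ++ u' = u' ++ v := by
        have : v ++ (v ++ u') = (v ++ u') ++ v := by rw [hu']; exact h.symm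
        rw [List.append_assoc] at this
        exact List.append_cancel_left this
      have hlen : v.length + u'.length ≤ N := by
        have : u.length = v.length + u'.length := by rw [← hu']; simp
        have hv0 : 0 < v.length := List.length_pos_iff.mpr hv
        omega
      obtain ⟨t, k, l, ht1, ht2⟩ := ih v u' hlen hcomm
      exact ⟨t, k + l, k, by rw [← hu', npow_appendPow, ht1, ht2], ht1⟩

lemma prim_not_comm {α : Type*} {p u v : List α} (hp : Primitive p)
    (hu : u ≠ []) (hv : v ≠ []) (hpuv : p = u ++ v) (h : u ++ v = v ++ u) : False := by
  obtain ⟨t, k, l, ht1, ht2⟩ := comm_lemma (u.length + v.length) u v le_rfl h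
  have hpt : p = npow t (k + l) := by rw [npow_appendPow, ← ht1, ← ht2, hpuv]
  have htp : t = p := hp.2 t (k + l) hpt
  rw [htp] at ht1 ht2
  have hk : 1 ≤ k := by
    rcases Nat.eq_zero_or_pos k with h0 | h0
    · rw [h0] at ht1; simp [npow] at ht1; exact absurd ht1 hu
    · exact h0
  have h1 : u.length = k * p.length := by rw [ht1, npow_length]
  have h2 : v.length = l * p.length := by rw [ht2, npow_length]
  have h3 : p.length = u.length + v.length := by rw [hpuv]; simp
  have hv0 : 0 < v.length := List.length_pos_iff.mpr hv
  have hp0 : 0 < p.length := List.length_pos_iff.mpr hp.1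
  nlinarith

lemma npow_take {α : Type*} (p : List α) {m q : ℕ} (h : q ≤ m) :
    (npow p m).take (q * p.length) = npow p q := by
  have : npow p m = npow p q ++ npow p (m - q) := by
    rw [← npow_appendPow]; congr 1; omega
  rw [this, List.take_left' (by rw [npow_length])]

lemma npow_drop {α : Type*} (p : List α) {m q : ℕ} (h : q ≤ m) :
    (npow p m).drop (q * p.length) = npow p (m - q) := by
  have : npow p m = npow p q ++ npow p (m - q) := by
    rw [← npow_appendPow]; congr 1; omega
  rw [this, List.drop_left' (by rw [npow_length])]

lemma prefix_of_prefix_append {α : Type*} {p s t : List α}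
    (h : p <+: s ++ t) (hl : p.length ≤ s.length) : p <+: s := by
  have h1 : p = (s ++ t).take p.length := (List.prefix_iff_eq_take.mp h)
  rw [List.take_append_of_le_length hl] at h1
  rw [h1]; exact List.take_prefix _ _

lemma sync {α : Type*} {p : List α} (hp : Primitive p) {m d : ℕ}
    (hd : d + p.length ≤ m * p.length) (h : p <+: (npow p m).drop d) :
    p.length ∣ d := by
  have hL : 0 < p.length := List.length_pos_iff.mpr hp.1
  set L := p.length with hLdef
  set q := d / L with hq
  set r := d % L with hr
  have hdr : L * q + r = d := Nat.div_add_mod d L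
  have hrL : r < L := Nat.mod_lt _ hL
  have hd' : d + L ≤ L * m := by rw [Nat.mul_comm]; exact hd
  rcases Nat.eq_zero_or_pos r with h0 | h0
  · exact ⟨q, by omega⟩
  exfalso
  -- q + 2 ≤ m
  have hqm : q + 2 ≤ m := by
    have e1 : L * (q + 1) = L * q + L := by ring
    have e2 : L * (q + 1) < L * m := by omega
    have := Nat.lt_of_mul_lt_mul_left e2
    omega
  -- rewrite the drop
  have hdrop1 : (npow p m).drop (L * q) = npow p (m - q) := by
    rw [Nat.mul_comm]; exact npow_drop p (by omega)
  have hdrop2 : npow p (m - q) = (p ++ p) ++ npow p (m - q - 2) := by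
    have : m - q = 2 + (m - q - 2) := by omega
    rw [this, npow_appendPow]
    simp [npow]
  have hdrop : (npow p m).drop d = ((p ++ p).drop r) ++ npow p (m - q - 2) := by
    have e : d = L * q + r := by omega
    rw [e, ← List.drop_drop, hdrop1, hdrop2,
      List.drop_append_of_le_length (by simp; omega)]
  rw [hdrop] at h
  have hpre : p <+: (p ++ p).drop r := by
    apply prefix_of_prefix_append h
    rw [List.length_drop]; simp; omega
  have hdr2 : (p ++ p).drop r = p.drop r ++ p :=
    List.drop_append_of_le_length (by omega)
  rw [hdr2] at hpre
  have hpv : p = p.drop r ++ p.take r := by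
    have h1 : p = (p.drop r ++ p).take L := List.prefix_iff_eq_take.mp hpre
    rw [List.take_append] at h1
    have h2 : (p.drop r).take L = p.drop r :=
      List.take_of_length_le (by rw [List.length_drop]; omega)
    rw [h2] at h1
    have h3 : L - (p.drop r).length = r := by rw [List.length_drop]; omega
    rw [h3] at h1
    exact h1
  apply prim_not_comm hp (u := p.take r) (v := p.drop r)
  · apply List.ne_nil_of_length_pos
    rw [List.length_take]; omega
  · apply List.ne_nil_of_length_pos
    rw [List.length_drop]; omega
  · exact (List.take_append_drop r p).symm
  · rw [List.take_append_drop]; exact hpv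

lemma main_aux {α : Type*} (w p x y x' y' : List α) (m n : ℕ)
    (hp : Primitive p) (hm : 1 ≤ m) (hn : 1 ≤ n)
    (h1 : w = x ++ npow p m ++ y) (h2 : w = x' ++ npow p n ++ y')
    (hle : x.length ≤ x'.length)
    (hov : x'.length + p.length ≤
      min (x.length + (npow p m).length) (x'.length + (npow p n).length)) :
    ∃ (x'' y'' : List α) (k : ℕ), 1 ≤ k ∧ w = x'' ++ npow p k ++ y'' ∧
      x''.length ≤ min x.length x'.length ∧
      y''.length ≤ min y.length y'.length := by
  have hL : 0 < p.length := List.length_pos_iff.mpr hp.1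
  rw [le_min_iff] at hov
  obtain ⟨hov1, _⟩ := hov
  rw [npow_length] at hov1
  -- x is a prefix of x'
  have hxw : w.take x.length = x := by
    rw [h1, List.append_assoc]; exact List.take_left
  have hx'w : w.take x'.length = x' := by
    rw [h2, List.append_assoc]; exact List.take_left
  set a := x'.drop x.length with ha
  have hxx' : x' = x ++ a := by
    have h3 : x'.take x.length = x := by
      rw [← hx'w, List.take_take, min_eq_left hle, hxw]
    conv_lhs => rw [← List.take_append_drop x.length x']
    rw [h3]
  have halen : a.length = x'.length - x.length := by
    rw [ha, List.length_drop]
  set d := x'.length - x.length with hd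
  -- key cancellation
  have key : npow p m ++ y = a ++ (npow p n ++ y') := by
    have h4 : x ++ (npow p m ++ y) = x ++ (a ++ (npow p n ++ y')) := by
      rw [← List.append_assoc, ← h1, ← List.append_assoc, ← hxx', h2,
        List.append_assoc]
    exact List.append_cancel_left h4
  have hdm : d + p.length ≤ m * p.length := by omega
  -- p is a prefix of (npow p m).drop d
  have hpn : p <+: npow p n := by
    obtain ⟨n', rfl⟩ : ∃ n', n = n' + 1 := ⟨n - 1, by omega⟩
    rw [Nat.add_comm, npow_appendPow]
    simp [npow]
  have hsplit : (npow p m ++ y).drop d = (npow p m).drop d ++ y :=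
    List.drop_append_of_le_length (by rw [npow_length]; omega)
  have hpd : p <+: (npow p m).drop d := by
    have h5 : (npow p m ++ y).drop d = npow p n ++ y' := by
      rw [key, ← halen, List.drop_left]
    rw [hsplit] at h5
    apply prefix_of_prefix_append (t := y)
    · rw [h5]; exact hpn.trans (List.prefix_append _ _)
    · rw [List.length_drop, npow_length]; omega
  obtain ⟨j, hj⟩ : p.length ∣ d := sync hp (by omega) hpd
  have hjm : j + 1 ≤ m := by
    have e1 : p.length * (j + 1) = p.length * j + p.length := by ring
    have e2 : p.length * (j + 1) ≤ p.length * m := by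
      have : m * p.length = p.length * m := Nat.mul_comm _ _
      omega
    exact Nat.le_of_mul_le_mul_left e2 hL
  -- a = npow p j
  have haj : a = npow p j := by
    have h6 : (npow p m ++ y).take d = a := by
      rw [key, ← halen, List.take_left]
    rw [← h6, List.take_append_of_le_length (by rw [npow_length]; omega),
      hj, Nat.mul_comm]
    exact npow_take p (by omega)
  -- the combined occurrence
  have hw2 : w = x ++ npow p (j + n) ++ y' := by
    rw [h2, hxx', haj, npow_appendPow]
    simp [List.append_assoc]
  -- length bookkeeping
  have hlw1 : w.length = x.length + m * p.length + y.length := by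
    rw [h1]; simp [npow_length]; omega
  have hlw2 : w.length = x'.length + n * p.length + y'.length := by
    rw [h2]; simp [npow_length]; omega
  rcases le_total (j + n) m with hc | hc
  · have hyl : y.length ≤ y'.length := by
      have h7 : (j + n) * p.length ≤ m * p.length := Nat.mul_le_mul_right _ hc
      have e : (j + n) * p.length = j * p.length + n * p.length :=
        Nat.add_mul _ _ _
      have e2 : j * p.length = p.length * j := Nat.mul_comm _ _
      omega
    exact ⟨x, y, m, hm, h1, le_min le_rfl hle, le_min le_rfl hyl⟩
  · have hyl : y'.length ≤ y.length := by
      have h7 : m * p.length ≤ (j + n) * p.length := Nat.mul_le_mul_right _ hc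
      have e : (j + n) * p.length = j * p.length + n * p.length :=
        Nat.add_mul _ _ _
      have e2 : j * p.length = p.length * j := Nat.mul_comm _ _
      omega
    exact ⟨x, y', j + n, by omega, hw2, le_min le_rfl hle, le_min hyl le_rfl⟩


/-- If two occurrences of powers of a primitive word `p` in `w` overlap in at
least `|p|` positions, then both are contained in a common occurrence of a
power of `p` in `w`. -/
theorem stmt2 {α : Type*} [DecidableEq α] (w p x y x' y' : List α) (m n : ℕ)
    (hp : Primitive p) (hm : 1 ≤ m) (hn : 1 ≤ n)
    (h1 : w = x ++ npow p m ++ y) (h2 : w = x' ++ npow p n ++ y')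
    (hov : max x.length x'.length + p.length ≤
      min (x.length + (npow p m).length) (x'.length + (npow p n).length)) :
    ∃ (x'' y'' : List α) (k : ℕ), 1 ≤ k ∧ w = x'' ++ npow p k ++ y'' ∧
      x''.length ≤ min x.length x'.length ∧
      y''.length ≤ min y.length y'.length := by
  rcases le_total x.length x'.length with h | h
  · rw [max_eq_right h] at hov
    exact main_aux w p x y x' y' m n hp hm hn h1 h2 h hov
  · rw [max_eq_left h] at hov
    rw [min_comm] at hov
    obtain ⟨x'', y'', k, hk, hw, hx, hy⟩ :=
      main_aux w p x' y' x y n m hp hn hm h2 h1 h hov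
    exact ⟨x'', y'', k, hk, hw, by rw [min_comm]; exact hx,
      by rw [min_comm]; exact hy⟩
end

section
/- For k ≥ 1, the words a^k b a^{k−1} and a^{k−1} b a^k over the alphabet {a,b} are k-abelian equivalent but not (k+1)-abelian equivalent. -/
lemma occ_nil {α : Type*} [DecidableEq α] (w : List α) : occ w [] = w.length + 1 := by
  simp [occ]

lemma occ_eq_count {α : Type*} [DecidableEq α] (w x : List α) :
    occ w x = (((List.range (w.length + 1)).map fun i => (w.drop i).take x.length).countP
      (fun y => y == x)) := by
  rw [occ, List.countP_map, ← List.countP_eq_length_filter]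
  refine List.countP_congr fun i _ => ?_
  simp only [Function.comp_apply, decide_eq_true_eq, beq_iff_eq, List.prefix_iff_eq_take]
  exact eq_comm

lemma helper1 {α : Type*} (a b : α) (p q i L : ℕ) (h : i + L ≤ p) :
    (((List.replicate p a ++ b :: List.replicate q a).drop i).take L) = List.replicate L a := by
  rw [List.drop_append, List.length_replicate, List.drop_replicate]
  have h1 : i - p = 0 := by omega
  rw [h1, List.drop_zero, List.take_append, List.take_replicate,
    List.length_replicate]
  have h2 : min L (p - i) = L := by omega
  have h3 : L - (p - i) = 0 := by omega
  simp [h2, h3]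

lemma helper2 {α : Type*} (a b : α) (p q i L s t : ℕ) (hp : p = i + s) (hL : L = s + 1 + t)
    (ht : t ≤ q) :
    (((List.replicate p a ++ b :: List.replicate q a).drop i).take L)
      = List.replicate s a ++ b :: List.replicate t a := by
  subst hp hL
  rw [List.drop_append, List.length_replicate, List.drop_replicate]
  have h1 : i - (i + s) = 0 := by omega
  have h2 : i + s - i = s := by omega
  rw [h1, h2, List.drop_zero, List.take_append, List.take_replicate,
    List.length_replicate]
  have h3 : min (s + 1 + t) s = s := by omega
  have h4 : s + 1 + t - s = t + 1 := by omega
  rw [h3, h4, List.take_succ_cons, List.take_replicate]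
  have h5 : min t q = t := by omega
  rw [h5]

lemma helper3 {α : Type*} (a b : α) (p q i L s : ℕ) (h : p < i) (hs : s = min L (p + 1 + q - i)) :
    (((List.replicate p a ++ b :: List.replicate q a).drop i).take L) = List.replicate s a := by
  rw [List.drop_append, List.length_replicate, List.drop_replicate]
  have h1 : p - i = 0 := by omega
  obtain ⟨j, hj⟩ : ∃ j, i - p = j + 1 := ⟨i - p - 1, by omega⟩
  rw [h1, hj]
  simp only [List.replicate_zero, List.nil_append, List.drop_succ_cons, List.drop_replicate,
    List.take_replicate]
  congr 1
  omega

lemma map_range_add' {β : Type*} (f : ℕ → β) (m n : ℕ) :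
    (List.range (m + n)).map f
      = (List.range m).map f ++ (List.range n).map (fun i => f (m + i)) := by
  rw [List.range_add, List.map_append, List.map_map]; rfl

lemma map_range_eq_replicate {β : Type*} (f : ℕ → β) (n : ℕ) (c : β)
    (h : ∀ i < n, f i = c) :
    (List.range n).map f = List.replicate n c := by
  calc (List.range n).map f = (List.range n).map (fun _ => c) :=
        List.map_congr_left (fun i hi => h i (List.mem_range.mp hi))
    _ = List.replicate n c := by simp

lemma key_perm {α : Type*} (a b : α) (l d : ℕ) :
    (((List.range (2*(l+d)+3)).map fun i =>
      ((List.replicate (l+d+1) a ++ b :: List.replicate (l+d) a).drop i).take (l+1))).Perm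
    (((List.range (2*(l+d)+3)).map fun i =>
      ((List.replicate (l+d) a ++ b :: List.replicate (l+d+1) a).drop i).take (l+1))) := by
  have hu : ((List.range (2*(l+d)+3)).map fun i =>
      ((List.replicate (l+d+1) a ++ b :: List.replicate (l+d) a).drop i).take (l+1))
      = List.replicate (d+1) (List.replicate (l+1) a)
        ++ ((List.range (l+1)).map (fun j => List.replicate (l-j) a ++ b :: List.replicate j a)
        ++ (List.replicate d (List.replicate (l+1) a)
        ++ (List.range (l+1)).map (fun j => List.replicate (l-j) a))) := by
    rw [show 2*(l+d)+3 = (d+1) + ((l+1) + (d + (l+1))) from by omega,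
      map_range_add' _ (d+1) ((l+1) + (d + (l+1))),
      map_range_add' _ (l+1) (d + (l+1)),
      map_range_add' _ d (l+1)]
    congr 1
    · refine map_range_eq_replicate _ _ _ (fun i hi => ?_)
      exact helper1 a b _ _ _ _ (by omega)
    congr 1
    · refine List.map_congr_left (fun j hj => ?_)
      have hj' := List.mem_range.mp hj
      exact helper2 a b _ _ _ _ (l-j) j (by omega) (by omega) (by omega)
    congr 1
    · refine map_range_eq_replicate _ _ _ (fun i hi => ?_)
      exact helper3 a b _ _ _ _ _ (by omega) (by omega)
    · refine List.map_congr_left (fun j hj => ?_)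
      have hj' := List.mem_range.mp hj
      exact helper3 a b _ _ _ _ _ (by omega) (by omega)
  have hv : ((List.range (2*(l+d)+3)).map fun i =>
      ((List.replicate (l+d) a ++ b :: List.replicate (l+d+1) a).drop i).take (l+1))
      = List.replicate d (List.replicate (l+1) a)
        ++ ((List.range (l+1)).map (fun j => List.replicate (l-j) a ++ b :: List.replicate j a)
        ++ (List.replicate (d+1) (List.replicate (l+1) a)
        ++ (List.range (l+1)).map (fun j => List.replicate (l-j) a))) := by
    rw [show 2*(l+d)+3 = d + ((l+1) + ((d+1) + (l+1))) from by omega,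
      map_range_add' _ d ((l+1) + ((d+1) + (l+1))),
      map_range_add' _ (l+1) ((d+1) + (l+1)),
      map_range_add' _ (d+1) (l+1)]
    congr 1
    · refine map_range_eq_replicate _ _ _ (fun i hi => ?_)
      exact helper1 a b _ _ _ _ (by omega)
    congr 1
    · refine List.map_congr_left (fun j hj => ?_)
      have hj' := List.mem_range.mp hj
      exact helper2 a b _ _ _ _ (l-j) j (by omega) (by omega) (by omega)
    congr 1
    · refine map_range_eq_replicate _ _ _ (fun i hi => ?_)
      exact helper3 a b _ _ _ _ _ (by omega) (by omega)
    · refine List.map_congr_left (fun j hj => ?_)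
      have hj' := List.mem_range.mp hj
      exact helper3 a b _ _ _ _ _ (by omega) (by omega)
  rw [hu, hv, ← Multiset.coe_eq_coe]
  simp only [← Multiset.coe_add]
  abel

/-- For `k ≥ 1`, the words `a^k b a^(k-1)` and `a^(k-1) b a^k` are `k`-abelian
equivalent but not `(k+1)`-abelian equivalent. -/
theorem stmt3 {α : Type*} [DecidableEq α] (a b : α) (hab : a ≠ b)
    (k : ℕ) (hk : 1 ≤ k) :
    KAbEq k (List.replicate k a ++ b :: List.replicate (k - 1) a)
            (List.replicate (k - 1) a ++ b :: List.replicate k a) ∧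
    ¬ KAbEq (k + 1) (List.replicate k a ++ b :: List.replicate (k - 1) a)
            (List.replicate (k - 1) a ++ b :: List.replicate k a) := by
  obtain ⟨m, rfl⟩ : ∃ m, k = m + 1 := ⟨k - 1, by omega⟩
  simp only [Nat.add_sub_cancel]
  constructor
  · intro x hx
    rcases hL : x.length with _ | l
    · obtain rfl : x = [] := List.length_eq_zero_iff.mp hL
      rw [occ_nil, occ_nil]
      simp only [List.length_append, List.length_replicate, List.length_cons]
      omega
    · obtain ⟨d, rfl⟩ : ∃ d, m = l + d := ⟨m - l, by omega⟩
      rw [occ_eq_count, occ_eq_count, hL]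
      have hlen1 : (List.replicate (l + d + 1) a ++ b :: List.replicate (l + d) a).length + 1
          = 2 * (l + d) + 3 := by
        simp only [List.length_append, List.length_replicate, List.length_cons]
        omega
      have hlen2 : (List.replicate (l + d) a ++ b :: List.replicate (l + d + 1) a).length + 1
          = 2 * (l + d) + 3 := by
        simp only [List.length_append, List.length_replicate, List.length_cons]
        omega
      rw [hlen1, hlen2]
      exact (key_perm a b l d).countP_eq _
  · intro hcon
    have hx := hcon (List.replicate (m + 1) a ++ [b]) (by simp)
    have h0 : occ (List.replicate m a ++ b :: List.replicate (m + 1) a)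
        (List.replicate (m + 1) a ++ [b]) = 0 := by
      rw [occ, List.length_eq_zero_iff, List.filter_eq_nil_iff]
      intro i _
      simp only [decide_eq_true_eq]
      intro hpre
      by_cases hi : i ≤ m
      · have heq := List.prefix_iff_eq_take.mp hpre
        have hdrop : (List.replicate m a ++ b :: List.replicate (m + 1) a).drop i
            = List.replicate (m - i) a ++ b :: List.replicate (m + 1) a := by
          rw [List.drop_append, List.length_replicate, List.drop_replicate]
          have : i - m = 0 := by omega
          rw [this, List.drop_zero]
        have hxlen : (List.replicate (m + 1) a ++ [b]).length = m + 2 := by simp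
        rw [hdrop, hxlen] at heq
        have htake : (List.replicate (m - i) a ++ b :: List.replicate (m + 1) a).take (m + 2)
            = List.replicate (m - i) a ++ b :: List.replicate (i + 1) a := by
          rw [List.take_append, List.take_replicate, List.length_replicate]
          have e1 : min (m + 2) (m - i) = m - i := by omega
          have e2 : m + 2 - (m - i) = i + 2 := by omega
          rw [e1, e2, List.take_succ_cons, List.take_replicate]
          have e3 : min (i + 1) (m + 1) = i + 1 := by omega
          rw [e3]
        rw [htake] at heq
        -- heq : replicate (m+1) a ++ [b] = replicate (m-i) a ++ b :: replicate (i+1) a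
        have hc := congrArg (fun t : List α => List.count b (t.take (m + 1))) heq
        beta_reduce at hc
        have c1 : ((List.replicate (m + 1) a ++ [b]).take (m + 1)) = List.replicate (m + 1) a := by
          rw [List.take_append, List.take_replicate, List.length_replicate]
          simp
        have c2 : ((List.replicate (m - i) a ++ b :: List.replicate (i + 1) a).take (m + 1))
            = List.replicate (m - i) a ++ b :: List.replicate i a := by
          rw [List.take_append, List.take_replicate, List.length_replicate]
          have e1 : min (m + 1) (m - i) = m - i := by omega
          have e2 : m + 1 - (m - i) = i + 1 := by omega
          rw [e1, e2, List.take_succ_cons, List.take_replicate]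
          have e3 : min i (i + 1) = i := by omega
          rw [e3]
        rw [c1, c2] at hc
        have hba : ¬ b = a := Ne.symm hab
        simp [List.count_append, List.count_cons, List.count_replicate, hba, hab] at hc
      · have hlen := hpre.length_le
        rw [List.length_drop] at hlen
        simp only [List.length_append, List.length_replicate, List.length_cons] at hlen
        omega
    have h1 : occ (List.replicate (m + 1) a ++ b :: List.replicate m a)
        (List.replicate (m + 1) a ++ [b]) ≠ 0 := by
      rw [occ]
      intro hzero
      rw [List.length_eq_zero_iff, List.filter_eq_nil_iff] at hzero
      refine hzero 0 (by simp) ?_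
      simp only [List.drop_zero, decide_eq_true_eq]
      refine ⟨List.replicate m a, ?_⟩
      simp
    rw [h0] at hx
    exact h1 hx
end

section
/- Two words of length at most 2k−1 are k-abelian equivalent if and only if they are equal. -/
section OccLemmas
variable {α : Type*} [DecidableEq α]


theorem occ_nil_s5 (x : List α) : occ [] x = if x = [] then 1 else 0 := by
  unfold occ
  simp [List.range_succ, List.filter_cons, List.prefix_nil]
  split <;> simp_all

theorem occ_cons (b : α) (w x : List α) :
    occ (b :: w) x = (if x <+: (b :: w) then 1 else 0) + occ w x := by
  unfold occ
  rw [List.length_cons, List.range_succ_eq_map, List.filter_cons]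
  have hf : ((fun i => decide (x <+: (b :: w).drop i)) ∘ Nat.succ)
      = fun i => decide (x <+: w.drop i) := rfl
  rw [List.filter_map, hf]
  split <;> simp_all [add_comm]


theorem occ_concat (b : α) (w x : List α) :
    occ (w ++ [b]) x = occ w x + (if x <:+ w ++ [b] then 1 else 0) := by
  induction w with
  | nil =>
    rw [List.nil_append, occ_cons, occ_nil_s5]
    have h1 : (x <+: [b]) ↔ x = [] ∨ x = [b] := by
      cases x <;> simp [List.cons_prefix_cons, List.prefix_nil]
    have h2 : (x <:+ [b]) ↔ x = [b] ∨ x = [] := by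
      simp [List.suffix_cons_iff]
    by_cases hb : x = [b]
    · subst hb; simp_all
    · by_cases hn : x = [] <;> simp_all
  | cons b' w ih =>
    rw [List.cons_append, occ_cons, ih, occ_cons]
    have h1 : (x <+: b' :: (w ++ [b])) ↔ x = b' :: w ++ [b] ∨ x <+: b' :: w := by
      rw [show b' :: (w ++ [b]) = (b' :: w) ++ [b] from rfl, List.prefix_concat_iff]
    have h2 : (x <:+ b' :: (w ++ [b])) ↔ (x <:+ w ++ [b]) ∨ x = b' :: w ++ [b] := by
      rw [List.suffix_cons_iff]; tauto
    by_cases hx : x = b' :: w ++ [b]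
    · subst hx
      have n1 : ¬ (w ++ [b] <+: w) := by
        intro h; have := h.length_le; simp at this
      have n2 : ¬ (b' :: (w ++ [b]) <:+ w ++ [b]) := by
        intro h; have := h.length_le; simp at this
      simp [h1, h2, n1, n2, List.cons_prefix_cons, List.cons_append, Nat.add_comm]
    · have n3 : ¬ (x = b' :: w ++ [b]) := hx
      simp only [h1, h2, n3, or_false, false_or]
      ring

theorem occ_reverse (w x : List α) : occ w.reverse x.reverse = occ w x := by
  induction w with
  | nil => rw [List.reverse_nil, occ_nil_s5, occ_nil_s5]; simp
  | cons b w ih =>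
    rw [occ_cons, List.reverse_cons, occ_concat, ih]
    have : (x.reverse <:+ w.reverse ++ [b]) ↔ (x <+: b :: w) := by
      rw [show w.reverse ++ [b] = (b :: w).reverse from by simp, List.reverse_suffix]
    simp only [this, Nat.add_comm]

theorem occ_count (w : List α) (a : α) : occ w [a] = w.count a := by
  induction w with
  | nil => rw [occ_nil_s5]; simp
  | cons b w ih =>
    rw [occ_cons, ih, List.count_cons]
    have : ([a] <+: b :: w) ↔ (a = b) := by
      constructor
      · intro h; exact (List.cons_prefix_cons.mp h).1
      · rintro rfl; exact ⟨w, rfl⟩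
    simp only [this]
    by_cases h : a = b
    · subst h; simp [Nat.add_comm]
    · have hb : (b == a) = false := by simpa using Ne.symm h
      simp [h, hb]

theorem occ_empty (w : List α) : occ w [] = w.length + 1 := by
  induction w with
  | nil => rw [occ_nil_s5]; simp
  | cons b w ih => rw [occ_cons, ih]; simp; omega

theorem occ_prefix_ext (w x : List α) (S : Finset α) (hS : ∀ a ∈ w, a ∈ S) :
    occ w x = (∑ a ∈ S, occ w (a :: x)) + (if x <+: w then 1 else 0) := by
  induction w with
  | nil =>
    rw [occ_nil_s5]
    simp [occ_nil_s5, List.prefix_nil]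
  | cons b w ih =>
    have hb : b ∈ S := hS b (List.mem_cons_self (a := b) (l := w))
    have hS' : ∀ a ∈ w, a ∈ S := fun a ha => hS a (List.mem_cons_of_mem b ha)
    rw [occ_cons, ih hS']
    have : ∑ a ∈ S, occ (b :: w) (a :: x)
        = (∑ a ∈ S, occ w (a :: x)) + (if x <+: w then 1 else 0) := by
      have e : ∀ a ∈ S, occ (b :: w) (a :: x)
          = occ w (a :: x) + (if a = b ∧ x <+: w then 1 else 0) := by
        intro a _
        rw [occ_cons, Nat.add_comm]
        congr 1
        simp [List.cons_prefix_cons, eq_comm]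
      rw [Finset.sum_congr rfl e, Finset.sum_add_distrib]
      congr 1
      have : ∀ a ∈ S, (if a = b ∧ x <+: w then 1 else 0)
          = (if a = b then (if x <+: w then 1 else 0) else 0) := by
        intro a _; by_cases h1 : a = b <;> by_cases h2 : x <+: w <;> simp [h1, h2]
      rw [Finset.sum_congr rfl this, Finset.sum_ite_eq' S b (fun _ => if x <+: w then 1 else 0)]
      simp [hb]
    rw [this]
    ring

theorem occ_suffix_ext (w x : List α) (S : Finset α) (hS : ∀ a ∈ w, a ∈ S) :
    occ w x = (∑ a ∈ S, occ w (x ++ [a])) + (if x <:+ w then 1 else 0) := by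
  have h := occ_prefix_ext w.reverse x.reverse S (by simpa using hS)
  rw [occ_reverse] at h
  rw [h]
  congr 1
  · apply Finset.sum_congr rfl
    intro a _
    rw [show a :: x.reverse = (x ++ [a]).reverse from by simp, occ_reverse]
  · rw [if_congr List.reverse_prefix rfl rfl]

end OccLemmas

/-- Two words of length at most `2k - 1` are `k`-abelian equivalent iff they
are equal. -/
theorem stmt5 {α : Type*} [DecidableEq α] (k : ℕ) (hk : 1 ≤ k) (u v : List α)
    (hu : u.length ≤ 2 * k - 1) (hv : v.length ≤ 2 * k - 1) :
    KAbEq k u v ↔ u = v := by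
  constructor
  · intro h
    have hlen : u.length = v.length := by
      have := h [] (by simp)
      rw [occ_empty, occ_empty] at this; omega
    set S : Finset α := u.toFinset ∪ v.toFinset with hSdef
    have hSu : ∀ a ∈ u, a ∈ S := fun a ha => Finset.mem_union_left _ (List.mem_toFinset.mpr ha)
    have hSv : ∀ a ∈ v, a ∈ S := fun a ha => Finset.mem_union_right _ (List.mem_toFinset.mpr ha)
    have hpre : ∀ x : List α, x.length + 1 ≤ k → ((x <+: u) ↔ (x <+: v)) := by
      intro x hx
      have e0 : occ u x = occ v x := h x (by omega)
      rw [occ_prefix_ext u x S hSu, occ_prefix_ext v x S hSv,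
        Finset.sum_congr rfl (fun a _ => h (a :: x) (by simp; omega))] at e0
      have := Nat.add_left_cancel e0
      by_cases p1 : x <+: u <;> by_cases p2 : x <+: v <;> simp [p1, p2] at this ⊢
    have hsuf : ∀ x : List α, x.length + 1 ≤ k → ((x <:+ u) ↔ (x <:+ v)) := by
      intro x hx
      have e0 : occ u x = occ v x := h x (by omega)
      rw [occ_suffix_ext u x S hSu, occ_suffix_ext v x S hSv,
        Finset.sum_congr rfl (fun a _ => h (x ++ [a]) (by simp; omega))] at e0
      have := Nat.add_left_cancel e0
      by_cases p1 : x <:+ u <;> by_cases p2 : x <:+ v <;> simp [p1, p2] at this ⊢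
    have hcount : ∀ a : α, u.count a = v.count a := by
      intro a
      have := h [a] (by simpa using hk)
      rwa [occ_count, occ_count] at this
    by_cases hn : u.length ≤ k
    · -- short case : u occurs in v
      have h1 : 1 ≤ occ v u := by
        rw [← h u hn]
        have h0 : 0 ∈ (List.range (u.length + 1)).filter (fun i => u <+: u.drop i) := by
          simp [List.mem_filter, List.mem_range]
        unfold occ
        exact List.length_pos_iff.mpr (List.ne_nil_of_mem h0)
      obtain ⟨i, hi⟩ := List.exists_mem_of_ne_nil _ (List.length_pos_iff.mp h1)
      rw [List.mem_filter] at hi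
      have hip : u <+: v.drop i := by simpa using hi.2
      have hle := hip.length_le
      rw [List.length_drop] at hle
      have hir : i < v.length + 1 := by simpa using List.mem_range.mp hi.1
      have hi0 : i = 0 := by omega
      rw [hi0, List.drop_zero] at hip
      exact hip.eq_of_length hlen
    · -- long case
      push_neg at hn
      have hk1 : k - 1 ≤ u.length := by omega
      have ht : u.take (k-1) = v.take (k-1) := by
        have hx : (u.take (k-1)).length + 1 ≤ k := by
          rw [List.length_take]; omega
        have := (hpre _ hx).mp (List.take_prefix _ _)
        rw [List.prefix_iff_eq_take.mp this, List.length_take]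
        congr 1; omega
      by_cases hcase : u.length ≤ 2 * k - 2
      · have hx : (u.drop (k-1)).length + 1 ≤ k := by
          rw [List.length_drop]; omega
        have hs := (hsuf _ hx).mp (List.drop_suffix _ _)
        have this := List.suffix_iff_eq_drop.mp hs
        have e2 : v.length - (List.drop (k-1) u).length = k - 1 := by
          rw [List.length_drop]; omega
        rw [e2] at this
        calc u = u.take (k-1) ++ u.drop (k-1) := (List.take_append_drop _ _).symm
        _ = v.take (k-1) ++ v.drop (k-1) := by rw [ht, this]
        _ = v := List.take_append_drop _ _
      · -- u.length = 2k - 1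
        have hn2 : u.length = 2 * k - 1 := by omega
        have hs : u.drop k = v.drop k := by
          have hx : (u.drop k).length + 1 ≤ k := by rw [List.length_drop]; omega
          have hsv := (hsuf _ hx).mp (List.drop_suffix _ _)
          have this := List.suffix_iff_eq_drop.mp hsv
          have e2 : v.length - (List.drop k u).length = k := by
            rw [List.length_drop]; omega
          rw [e2] at this
          exact this
        have hudec : u = u.take (k-1) ++ ((u.drop (k-1)).take 1 ++ u.drop k) := by
          conv_lhs => rw [← List.take_append_drop (k-1) u]
          congr 1
          conv_lhs => rw [← List.take_append_drop 1 (u.drop (k-1))]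
          rw [List.drop_drop]
          congr 2
          omega
        have hvdec : v = v.take (k-1) ++ ((v.drop (k-1)).take 1 ++ v.drop k) := by
          conv_lhs => rw [← List.take_append_drop (k-1) v]
          congr 1
          conv_lhs => rw [← List.take_append_drop 1 (v.drop (k-1))]
          rw [List.drop_drop]
          congr 2
          omega
        have hmu : ((u.drop (k-1)).take 1).length = 1 := by
          rw [List.length_take, List.length_drop]; omega
        have hmv : ((v.drop (k-1)).take 1).length = 1 := by
          rw [List.length_take, List.length_drop]; omega
        obtain ⟨c, hc⟩ := List.length_eq_one_iff.mp hmu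
        obtain ⟨d, hd⟩ := List.length_eq_one_iff.mp hmv
        have hcd : c = d := by
          have hcnt := hcount c
          rw [hudec, hvdec, hc, hd, ht, hs] at hcnt
          simp only [List.count_append] at hcnt
          have h2 : List.count c [c] = List.count c [d] := by omega
          by_contra hne
          have hb : (c == d) = false := beq_eq_false_iff_ne.mpr hne
          simp [List.count_cons, hb, Ne.symm hne] at h2
        rw [hudec, hvdec, hc, hd, ht, hs, hcd]
  · rintro rfl
    intro x _
    rfl
end

section
/- Every separating set of factors X of a language L contains a subset that is an inclusion-minimal SSF of L (i.e., an SSF of L none of whose proper subsets is an SSF of L). In particular, every language that has an SSF has an inclusion-minimal SSF. -/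
/-- If `x` occurs in `w`, then `x` is a sublist of `w`. -/
lemma sublist_of_occ_ne_zero {α : Type*} [DecidableEq α] {w x : List α}
    (h : occ w x ≠ 0) : List.Sublist x w := by
  unfold occ at h
  obtain ⟨i, hi⟩ := List.exists_mem_of_length_pos (Nat.pos_of_ne_zero h)
  rw [List.mem_filter] at hi
  have hp : x <+: w.drop i := by simpa using hi.2
  exact hp.sublist.trans (List.drop_sublist i w)

/-- Every SSF `X` of `L` contains an inclusion-minimal SSF of `L`. -/
theorem stmt8 {α : Type*} [DecidableEq α] (L X : Set (List α)) (hX : IsSSF X L) :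
    ∃ Y ⊆ X, IsSSF Y L ∧ ∀ Z ⊂ Y, ¬ IsSSF Z L := by
  have hH : ∀ c ⊆ {Y | Y ⊆ X ∧ IsSSF Y L}, IsChain (· ⊆ ·) c → c.Nonempty →
      ∃ lb ∈ {Y | Y ⊆ X ∧ IsSSF Y L}, ∀ s ∈ c, lb ⊆ s := by
    intro c hcS hchain hcne
    refine ⟨⋂₀ c, ⟨?_, ?_⟩, fun s hs => Set.sInter_subset_of_mem hs⟩
    · obtain ⟨Y0, hY0⟩ := hcne
      exact (Set.sInter_subset_of_mem hY0).trans (hcS hY0).1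
    · intro u hu v hv huv
      by_contra hno
      push_neg at hno
      -- the set of separators of the pair (u, v)
      set S : Set (List α) := {x | occ u x ≠ occ v x} with hS
      have hSfin : S.Finite := by
        apply Set.Finite.subset ((u.sublists.toFinset ∪ v.sublists.toFinset) :
          Finset (List α)).finite_toSet
        intro x hx
        simp only [Finset.coe_union, Set.mem_union, Finset.coe_sort_coe,
          List.coe_toFinset, Set.mem_setOf_eq, List.mem_sublists]
        rcases eq_or_ne (occ u x) 0 with h0 | h0
        · exact Or.inr (sublist_of_occ_ne_zero (fun h => hx (h0.trans h.symm)))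
        · exact Or.inl (sublist_of_occ_ne_zero h0)
      have key : ∀ s, s ∈ S → ∃ Y, Y ∈ c ∧ s ∉ Y := by
        intro s hs
        by_contra hc
        push_neg at hc
        exact hs (hno s (fun Y hY => hc Y hY))
      choose! f hfc hfs using key
      have hTfin : (f '' S).Finite := hSfin.image f
      have hTne : (f '' S).Nonempty := by
        obtain ⟨Y0, hY0⟩ := hcne
        obtain ⟨x, -, hx⟩ := (hcS hY0).2 u hu v hv huv
        exact ⟨f x, x, hx, rfl⟩
      obtain ⟨m, hmT, hmmin⟩ : ∃ m ∈ f '' S, ∀ a' ∈ f '' S, id a' ≤ id m → id m = id a' := by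
        obtain ⟨m, hmT, hmmin⟩ := Set.Finite.exists_minimalFor id (f '' S) hTfin hTne
        exact ⟨m, hmT, fun a' ha h => le_antisymm (hmmin ha h) h⟩
      obtain ⟨s0, hs0, rfl⟩ := hmT
      have hmc : f s0 ∈ c := hfc s0 hs0
      obtain ⟨x, hxm, hx⟩ := (hcS hmc).2 u hu v hv huv
      have hxS : x ∈ S := hx
      have hfxc : f x ∈ c := hfc x hxS
      rcases eq_or_ne (f s0) (f x) with heq | hne
      · exact hfs x hxS (heq ▸ hxm)
      · rcases hchain hmc hfxc hne with h | h
        · exact hfs x hxS (h hxm)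
        · have := hmmin (f x) ⟨x, hxS, rfl⟩ h
          exact hfs x hxS (by rw [show f x = f s0 from this.symm]; exact hxm)
  -- apply Zorn
  obtain ⟨Y, hYsub, hmin⟩ := zorn_superset_nonempty
    {Y | Y ⊆ X ∧ IsSSF Y L} hH X ⟨subset_rfl, hX⟩
  obtain ⟨hYX, hY⟩ := hmin.1
  refine ⟨Y, hYX, hY, fun Z hZ hZSSF => hZ.2 ?_⟩
  exact hmin.2 ⟨hZ.1.trans hYX, hZSSF⟩ hZ.1
end

section
/- If a language L has a finite SSF and F is a finite language, then L ∪ F has a finite SSF. -/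
lemma occ_pos_of_prefix {α : Type*} [DecidableEq α] {w x : List α} (h : x <+: w) :
    0 < occ w x := by
  have h0 : 0 ∈ (List.range (w.length + 1)).filter (fun i => x <+: w.drop i) := by
    simp [List.mem_filter, h]
  exact List.length_pos_iff.mpr (fun he => by simp [he] at h0)

lemma occ_eq_zero_of_lt {α : Type*} [DecidableEq α] {w x : List α}
    (h : w.length < x.length) : occ w x = 0 := by
  unfold occ
  rw [List.length_eq_zero_iff, List.filter_eq_nil_iff]
  intro i _
  simp only [decide_eq_true_eq]
  intro hp
  have := hp.length_le
  simp only [List.length_drop] at this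
  omega

lemma occ_eq_zero_of_ne {α : Type*} [DecidableEq α] {u v : List α}
    (hlen : u.length = v.length) (hne : u ≠ v) : occ v u = 0 := by
  rcases Nat.eq_zero_or_pos v.length with h0 | h0
  · exact absurd (by rw [List.length_eq_zero_iff.mp (hlen.trans h0), List.length_eq_zero_iff.mp h0])
      hne
  unfold occ
  rw [List.length_eq_zero_iff, List.filter_eq_nil_iff]
  intro i _
  simp only [decide_eq_true_eq]
  intro hp
  have hle := hp.length_le
  simp only [List.length_drop] at hle
  have hi : i = 0 := by omega
  subst hi
  simp only [List.drop_zero] at hp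
  exact hne (List.IsPrefix.eq_of_length hp hlen)

lemma sep_short {α : Type*} [DecidableEq α] {u v : List α} {N : ℕ}
    (hv : v.length ≤ N) (hne : u ≠ v) :
    ∃ x : List α, x.length ≤ N + 1 ∧ occ u x ≠ occ v x := by
  rcases lt_trichotomy u.length v.length with h | h | h
  · refine ⟨v, by omega, ?_⟩
    rw [occ_eq_zero_of_lt h]
    exact (occ_pos_of_prefix (List.prefix_refl v)).ne
  · refine ⟨u, by omega, ?_⟩
    rw [occ_eq_zero_of_ne h hne]
    exact (occ_pos_of_prefix (List.prefix_refl u)).ne'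
  · refine ⟨u.take (v.length + 1), ?_, ?_⟩
    · rw [List.length_take]
      exact le_trans (min_le_left _ _) (by omega)
    · rw [occ_eq_zero_of_lt (w := v) (by rw [List.length_take]; omega)]
      exact (occ_pos_of_prefix (List.take_prefix _ u)).ne'

/-- If `L` has a finite SSF and `F` is finite, then `L ∪ F` has a finite SSF. -/
theorem stmt10 {α : Type*} [DecidableEq α] [Fintype α] (L F : Set (List α))
    (hL : HasFiniteSSF L) (hF : F.Finite) :
    HasFiniteSSF (L ∪ F) := by
  obtain ⟨X, hXf, hX⟩ := hL
  obtain ⟨N, hN⟩ : ∃ N, ∀ v ∈ F, v.length ≤ N := by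
    refine ⟨hF.toFinset.sup List.length, fun v hv => ?_⟩
    exact Finset.le_sup (hF.mem_toFinset.mpr hv)
  refine ⟨X ∪ {x | x.length ≤ N + 1}, hXf.union (List.finite_length_le α (N + 1)), ?_⟩
  intro u hu v hv hne
  rcases hu with hu | hu
  · rcases hv with hv | hv
    · obtain ⟨x, hx, hocc⟩ := hX u hu v hv hne
      exact ⟨x, Or.inl hx, hocc⟩
    · obtain ⟨x, hx, hocc⟩ := sep_short (hN v hv) hne
      exact ⟨x, Or.inr hx, hocc⟩
  · obtain ⟨x, hx, hocc⟩ := sep_short (hN u hu) hne.symm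
    exact ⟨x, Or.inr hx, hocc.symm⟩
end

section
/- Every regular language is either bounded (a subset of v_1^* v_2^* ⋯ v_n^* for some words v_1,…,v_n) or contains a subset of the form x w^* y w^* z for some words w, x, y, z with wy ≠ yw. -/
/-- The Kleene star of `L`. -/
def kstar {α : Type*} (L : Set (List α)) : Set (List α) :=
  {w | ∃ ls : List (List α), (∀ x ∈ ls, x ∈ L) ∧ w = ls.flatten}

/-- Regular languages: built from finite languages by union, concatenation and
Kleene star. -/
inductive Reg {α : Type*} : Set (List α) → Prop
  | fin (L : Set (List α)) : L.Finite → Reg L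
  | union (K L : Set (List α)) : Reg K → Reg L → Reg (K ∪ L)
  | concat (K L : Set (List α)) : Reg K → Reg L →
      Reg (Set.image2 (fun u v => u ++ v) K L)
  | star (L : Set (List α)) : Reg L → Reg (kstar L)

/-- `L` is bounded if `L ⊆ v₁^* ⋯ vₙ^*` for some words `v₁, …, vₙ`. -/
def Bounded {α : Type*} (L : Set (List α)) : Prop :=
  ∃ vs : List (List α), ∀ w ∈ L, ∃ ms : List ℕ,
    ms.length = vs.length ∧ w = (List.zipWith npow vs ms).flatten

namespace St16

theorem pow_one {α : Type*} (t : List α) : npow t 1 = t := by simp [npow]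

theorem pow_nil {α : Type*} (n : ℕ) : npow ([] : List α) n = [] := by
  induction n with
  | zero => rfl
  | succ n ih => simp [npow, ih]

theorem length_pow {α : Type*} (t : List α) (n : ℕ) :
    (npow t n).length = n * t.length := by
  induction n with
  | zero => simp [npow]
  | succ n ih => simp [npow, ih]; ring

theorem pow_add {α : Type*} (t : List α) (a b : ℕ) :
    npow t (a + b) = npow t a ++ npow t b := by
  induction a with
  | zero => simp [npow]
  | succ n ih =>
    have h : n + 1 + b = (n + b) + 1 := by omega
    rw [h]; simp [npow, ih]

theorem pow_mul {α : Type*} (t : List α) (a b : ℕ) :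
    npow t (a * b) = npow (npow t a) b := by
  induction b with
  | zero => simp [npow]
  | succ n ih =>
    have h : a * (n + 1) = a + a * n := by ring
    rw [h, pow_add, ih]; rfl

theorem pow_comm {α : Type*} (t : List α) (n : ℕ) :
    t ++ npow t n = npow t n ++ t := by
  induction n with
  | zero => simp [npow]
  | succ n ih =>
    show t ++ (t ++ npow t n) = (t ++ npow t n) ++ t
    rw [List.append_assoc, ← ih]

theorem comm_pow {α : Type*} {x z : List α} (h : x ++ z = z ++ x) (n : ℕ) :
    x ++ npow z n = npow z n ++ x := by
  induction n with
  | zero => simp [npow]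
  | succ n ih =>
    show x ++ (z ++ npow z n) = (z ++ npow z n) ++ x
    rw [← List.append_assoc, h, List.append_assoc, ih, ← List.append_assoc]

/-- If u and v commute and |u| ≤ |v|, then u is a prefix of v. -/
theorem prefix_of_comm {α : Type*} {u v : List α} (h : u ++ v = v ++ u)
    (hle : u.length ≤ v.length) : v = u ++ v.drop u.length := by
  have h1 : u = (u ++ v).take u.length := List.take_left.symm
  rw [h] at h1
  rw [List.take_append] at h1
  have h2 : u.length - v.length = 0 := by omega
  rw [h2] at h1
  simp at h1
  conv_lhs => rw [← List.take_append_drop u.length v]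
  rw [← h1]

/-- Commuting words are powers of a common word. -/
theorem commA {α : Type*} : ∀ (u v : List α), u ++ v = v ++ u →
    ∃ t a b, u = npow t a ∧ v = npow t b := fun u v h => by
  rcases eq_or_ne u [] with hu | hu
  · exact ⟨v, 0, 1, by simp [hu, npow], by simp [npow]⟩
  rcases eq_or_ne v [] with hv | hv
  · exact ⟨u, 1, 0, by simp [npow], by simp [hv, npow]⟩
  have hul : 0 < u.length := List.length_pos_iff.mpr hu
  have hvl : 0 < v.length := List.length_pos_iff.mpr hv
  rcases le_or_gt u.length v.length with hle | hlt
  · have hsplit := prefix_of_comm h hle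
    set v' := v.drop u.length with hv'
    have h' : u ++ v' = v' ++ u := by
      have := h
      rw [hsplit, List.append_assoc] at this
      exact List.append_cancel_left this
    have hdec : u.length + v'.length < u.length + v.length := by
      have : v'.length = v.length - u.length := by simp [hv']
      omega
    obtain ⟨t, a, b, hu1, hv1⟩ := commA u v' h'
    exact ⟨t, a, a + b, hu1, by rw [hsplit, hu1, hv1, pow_add]⟩
  · have hsplit := prefix_of_comm h.symm (le_of_lt hlt)
    set u' := u.drop v.length with hu'
    have h' : v ++ u' = u' ++ v := by
      have := h.symm
      rw [hsplit, List.append_assoc] at this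
      exact List.append_cancel_left this
    have hdec : v.length + u'.length < u.length + v.length := by
      have : u'.length = u.length - v.length := by simp [hu']
      omega
    obtain ⟨t, a, b, hv1, hu1⟩ := commA v u' h'
    exact ⟨t, a + b, a, by rw [hsplit, hv1, hu1, pow_add], hv1⟩
termination_by u v _ => u.length + v.length

/-- Two words commuting with the same nonempty word commute. -/
theorem commB {α : Type*} {z x y : List α} (hz : z ≠ [])
    (hx : x ++ z = z ++ x) (hy : y ++ z = z ++ y) : x ++ y = y ++ x := by
  set N := x.length + y.length with hN
  set Z := npow z N with hZ
  have hZlen : N ≤ Z.length := by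
    have : 0 < z.length := List.length_pos_iff.mpr hz
    simp [hZ, length_pow]
    nlinarith
  have hxy : (x ++ y) ++ Z = Z ++ (x ++ y) := by
    rw [List.append_assoc, comm_pow hy, ← List.append_assoc, comm_pow hx,
      List.append_assoc]
  have hyx : (y ++ x) ++ Z = Z ++ (y ++ x) := by
    rw [List.append_assoc, comm_pow hx, ← List.append_assoc, comm_pow hy,
      List.append_assoc]
  have key : ∀ w : List α, w.length = N → w ++ Z = Z ++ w → w = Z.take N := by
    intro w hw hcomm
    have h1 : w = (w ++ Z).take N := by rw [← hw, List.take_left]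
    rw [hcomm, List.take_append] at h1
    have h2 : N - Z.length = 0 := by omega
    rw [h2] at h1
    simpa using h1
  rw [key (x ++ y) (by simp [hN]) hxy, key (y ++ x) (by simp [hN]; omega) hyx]

/-- Every nonempty word is a power of a primitive word. -/
theorem exists_primitive {α : Type*} : ∀ (u : List α), u ≠ [] →
    ∃ t a, Primitive t ∧ u = npow t a := fun u hu => by
  by_cases hp : Primitive u
  · exact ⟨u, 1, hp, (pow_one u).symm⟩
  · rw [Primitive] at hp
    push_neg at hp
    obtain ⟨q, n, hq, hqu⟩ := hp hu
    have hqne : q ≠ [] := by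
      rintro rfl
      rw [pow_nil] at hq
      exact hu hq
    have hn0 : n ≠ 0 := by
      rintro rfl
      exact hu hq
    have hn1 : n ≠ 1 := by
      rintro rfl
      rw [pow_one] at hq
      exact hqu hq.symm
    have hql : 0 < q.length := List.length_pos_iff.mpr hqne
    have hdec : q.length < u.length := by
      have hl := length_pow q n
      rw [← hq] at hl
      have h2 : 2 ≤ n := by omega
      nlinarith
    obtain ⟨t, b, hprim, hqt⟩ := exists_primitive q hqne
    exact ⟨t, b * n, hprim, by rw [hq, hqt, pow_mul]⟩
termination_by u _ => u.length

/-- The centralizer of a nonempty word consists of powers of one word. -/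
theorem central {α : Type*} (u : List α) (hu : u ≠ []) :
    ∃ t : List α, ∀ v, u ++ v = v ++ u → ∃ m, v = npow t m := by
  obtain ⟨t, a, hprim, hua⟩ := exists_primitive u hu
  refine ⟨t, fun v hv => ?_⟩
  obtain ⟨p, b, c, hub, hvc⟩ := commA u v hv
  have htu : t ++ u = u ++ t := by rw [hua]; exact pow_comm t a
  have hpu : p ++ u = u ++ p := by rw [hub]; exact pow_comm p b
  have htp : t ++ p = p ++ t := commB hu htu hpu
  obtain ⟨q, d, e, htq, hpq⟩ := commA t p htp
  have hqt : q = t := hprim.2 q d htq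
  subst hqt
  exact ⟨e * c, by rw [hvc, hpq, pow_mul]⟩

theorem join_app {α : Type*} (a b : List (List α)) :
    (a ++ b).flatten = a.flatten ++ b.flatten := by
  show (a ++ b).flatten = a.flatten ++ b.flatten
  exact List.flatten_append

theorem join_zeros {α : Type*} (l : List (List α)) :
    (List.zipWith npow l (List.replicate l.length 0)).flatten = [] := by
  induction l with
  | nil => rfl
  | cons x l ih =>
    rw [List.length_cons, List.replicate_succ, List.zipWith_cons_cons, List.flatten_cons]
    simpa [npow] using ih

theorem mem_list_bounded {α : Type*} : ∀ (l : List (List α)) (w : List α), w ∈ l →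
    ∃ ms : List ℕ, ms.length = l.length ∧ w = (List.zipWith npow l ms).flatten := by
  intro l
  induction l with
  | nil => intro w hw; simp at hw
  | cons x l ih =>
    intro w hw
    rcases List.mem_cons.mp hw with h | h
    · refine ⟨1 :: List.replicate l.length 0, by simp, ?_⟩
      simp [npow, join_zeros, h]
    · obtain ⟨ms, hlen, hw'⟩ := ih w h
      exact ⟨0 :: ms, by simp [hlen], by simp [npow, hw']⟩

theorem flatten_replicate {α : Type*} (u : List α) (n : ℕ) :
    (List.replicate n u).flatten = npow u n := by
  induction n with
  | zero => rfl
  | succ n ih => simp [List.replicate_succ, npow, ih]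

theorem join_powers {α : Type*} (t : List α) :
    ∀ ls : List (List α), (∀ x ∈ ls, ∃ m, x = npow t m) →
    ∃ M, ls.flatten = npow t M := by
  intro ls
  induction ls with
  | nil => exact fun _ => ⟨0, rfl⟩
  | cons x ls ih =>
    intro h
    obtain ⟨m, hm⟩ := h x (by simp)
    obtain ⟨M, hM⟩ := ih fun y hy => h y (by simp [hy])
    exact ⟨m + M, by simp [hm, hM, pow_add]⟩

end St16

/-- Every regular language is bounded or contains a subset of the form
`x w^* y w^* z` with `wy ≠ yw`. -/
theorem stmt16 {α : Type*} [DecidableEq α] (L : Set (List α)) (hL : Reg L) :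
    Bounded L ∨
      ∃ w x y z : List α, w ++ y ≠ y ++ w ∧
        ∀ i j : ℕ, x ++ npow w i ++ y ++ npow w j ++ z ∈ L := by
  induction hL with
  | fin L hfin =>
    left
    refine ⟨hfin.toFinset.toList, fun w hw => ?_⟩
    exact St16.mem_list_bounded _ w (by simpa using hw)
  | union K L hK hL ihK ihL =>
    rcases ihK with hbK | ⟨w, x, y, z, hne, hmem⟩
    · rcases ihL with hbL | ⟨w, x, y, z, hne, hmem⟩
      · left
        obtain ⟨vsK, hK'⟩ := hbK
        obtain ⟨vsL, hL'⟩ := hbL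
        refine ⟨vsK ++ vsL, fun w hw => ?_⟩
        rcases hw with hw | hw
        · obtain ⟨ms, hlen, hw'⟩ := hK' w hw
          refine ⟨ms ++ List.replicate vsL.length 0, by simp [hlen], ?_⟩
          rw [List.zipWith_append hlen.symm, St16.join_app,
            St16.join_zeros, hw', List.append_nil]
        · obtain ⟨ms, hlen, hw'⟩ := hL' w hw
          refine ⟨List.replicate vsK.length 0 ++ ms, by simp [hlen], ?_⟩
          rw [List.zipWith_append (l₁ := vsK) (by simp), St16.join_app,
            St16.join_zeros, hw', List.nil_append]
      · exact Or.inr ⟨w, x, y, z, hne, fun i j => Set.mem_union_right K (hmem i j)⟩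
    · exact Or.inr ⟨w, x, y, z, hne, fun i j => Set.mem_union_left L (hmem i j)⟩
  | concat K L hK hL ihK ihL =>
    rcases ihK with hbK | ⟨w, x, y, z, hne, hmem⟩
    · rcases ihL with hbL | ⟨w, x, y, z, hne, hmem⟩
      · left
        obtain ⟨vsK, hK'⟩ := hbK
        obtain ⟨vsL, hL'⟩ := hbL
        refine ⟨vsK ++ vsL, fun w hw => ?_⟩
        obtain ⟨u, hu, v, hv, rfl⟩ := hw
        obtain ⟨msu, hlenu, hu'⟩ := hK' u hu
        obtain ⟨msv, hlenv, hv'⟩ := hL' v hv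
        refine ⟨msu ++ msv, by simp [hlenu, hlenv], ?_⟩
        rw [List.zipWith_append hlenu.symm, St16.join_app, hu', hv']
      · rcases K.eq_empty_or_nonempty with hKe | ⟨u0, hu0⟩
        · left
          refine ⟨[], fun w hw => ?_⟩
          obtain ⟨u, hu, v, hv, rfl⟩ := hw
          rw [hKe] at hu
          exact absurd hu (Set.notMem_empty u)
        · right
          refine ⟨w, u0 ++ x, y, z, hne, fun i j => ?_⟩
          exact ⟨u0, hu0, _, hmem i j, by simp [List.append_assoc]⟩
    · rcases L.eq_empty_or_nonempty with hLe | ⟨v0, hv0⟩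
      · left
        refine ⟨[], fun w hw => ?_⟩
        obtain ⟨u, hu, v, hv, rfl⟩ := hw
        rw [hLe] at hv
        exact absurd hv (Set.notMem_empty v)
      · right
        refine ⟨w, x, y, z ++ v0, hne, fun i j => ?_⟩
        exact ⟨_, hmem i j, v0, hv0, by simp [List.append_assoc]⟩
  | star L hL ih =>
    by_cases hcomm : ∀ u ∈ L, ∀ v ∈ L, u ++ v = v ++ u
    · left
      by_cases hne : ∃ u ∈ L, u ≠ []
      · obtain ⟨u, huL, hune⟩ := hne
        obtain ⟨t, ht⟩ := St16.central u hune
        refine ⟨[t], fun w hw => ?_⟩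
        obtain ⟨ls, hls, rfl⟩ := hw
        obtain ⟨M, hM⟩ :=
          St16.join_powers t ls (fun v hv => ht v (hcomm u huL v (hls v hv)))
        exact ⟨[M], rfl, by simp [hM, npow]⟩
      · push_neg at hne
        refine ⟨[], fun w hw => ?_⟩
        obtain ⟨ls, hls, rfl⟩ := hw
        refine ⟨[], rfl, ?_⟩
        simp only [List.zipWith_nil_left, List.flatten_nil]
        rw [List.flatten_eq_nil_iff]
        exact fun v hv => hne v (hls v hv)
    · push_neg at hcomm
      obtain ⟨u, hu, v, hv, huv⟩ := hcomm
      right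
      refine ⟨u, [], v, [], huv, fun i j => ?_⟩
      refine ⟨List.replicate i u ++ v :: List.replicate j u, ?_, ?_⟩
      · intro s hs
        rcases List.mem_append.mp hs with hs | hs
        · rw [List.eq_of_mem_replicate hs]; exact hu
        · rcases List.mem_cons.mp hs with rfl | hs
          · exact hv
          · rw [List.eq_of_mem_replicate hs]; exact hu
      · show ([] ++ npow u i ++ v ++ npow u j ++ []) =
          (List.replicate i u ++ v :: List.replicate j u).flatten
        rw [List.flatten_append, List.flatten_cons, St16.flatten_replicate,
          St16.flatten_replicate]
        simp [List.append_assoc]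
end

section
/- If an infinite word w is ultimately periodic, written w = u v^ω with v primitive and v not a suffix of u, then for k = |uv| + 1 any two k-abelian equivalent factors of w are equal; consequently the factor complexity of w equals its k-abelian complexity. -/
/-- `x` is a (finite) factor of the infinite word `W`. -/
def FactorOf {α : Type*} (x : List α) (W : ℕ → α) : Prop :=
  ∃ i : ℕ, x = (List.range x.length).map fun j => W (i + j)

namespace Aux17

variable {α : Type*} [DecidableEq α]

lemma occ_eq_countP (w x : List α) :
    occ w x = (List.range (w.length + 1)).countP (fun i => decide (x <+: w.drop i)) := by
  simp [occ, List.countP_eq_length_filter]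

lemma occ_nil (w : List α) : occ w ([] : List α) = w.length + 1 := by
  rw [occ_eq_countP, List.countP_eq_length.2 (by simp)]
  simp

lemma occ_self_pos (w : List α) : 0 < occ w w := by
  rw [occ_eq_countP, List.countP_pos_iff]
  exact ⟨0, by simp, by simp⟩

/-- `occL w t` counts occurrences of `t` in `w` at positions `≥ 1`. -/
def occL (w t : List α) : ℕ :=
  (List.range (w.length + 1)).countP (fun i => decide (t <+: w.drop (i + 1)))

lemma occ_split (w t : List α) (ht : t ≠ []) :
    occ w t = (if t <+: w then 1 else 0) + occL w t := by
  rw [occ_eq_countP, List.range_succ_eq_map, List.countP_cons, List.countP_map]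
  rw [occL, List.range_succ, List.countP_append]
  have h1 : (List.range w.length).countP
      ((fun i => decide (t <+: w.drop i)) ∘ Nat.succ) =
      (List.range w.length).countP (fun i => decide (t <+: w.drop (i + 1))) := by
    apply List.countP_congr; intro i _; simp [Nat.succ_eq_add_one]
  have h2 : List.countP (fun i => decide (t <+: w.drop (i + 1))) [w.length] = 0 := by
    simp only [List.countP_cons, List.countP_nil]
    have : w.drop (w.length + 1) = [] := List.drop_eq_nil_iff.2 (by omega)
    simp [this, List.prefix_nil, ht]
  rw [h1, h2]
  simp [List.drop_zero]
  omega

lemma sum_countP_get (s : Finset α) (g : ℕ → Option α) :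
    ∀ F : List ℕ, (∀ i ∈ F, ∃ a ∈ s, g i = some a) →
      ∑ a ∈ s, F.countP (fun i => decide (g i = some a)) = F.length
  | [], _ => by simp
  | i :: F, h => by
    obtain ⟨a₀, ha₀, hg⟩ := h i (by simp)
    have ih := sum_countP_get s g F (fun j hj => h j (by simp [hj]))
    simp only [List.countP_cons]
    rw [Finset.sum_add_distrib, ih]
    have he : ∀ a ∈ s, (if (decide (g i = some a)) = true then 1 else 0)
        = if a = a₀ then (1:ℕ) else 0 := by
      intro a _
      by_cases hc : a = a₀
      · simp [hc, hg]
      · have : g i ≠ some a := by rw [hg]; simpa using fun h' => hc h'.symm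
        simp [hc, this]
    rw [Finset.sum_congr rfl he, Finset.sum_ite_eq' s a₀ (fun _ => (1:ℕ)), if_pos ha₀]
    simp [List.length_cons]

lemma occ_cons (w t : List α) (a : α) :
    occ w (a :: t) =
      ((List.range (w.length + 1)).filter (fun i => decide (t <+: w.drop (i + 1)))).countP
        (fun i => decide (w[i]? = some a)) := by
  rw [occ_eq_countP, List.countP_filter]
  apply List.countP_congr
  intro i _
  simp only [decide_eq_true_eq, Bool.and_eq_true]
  constructor
  · intro hp
    by_cases hi : i < w.length
    · rw [List.drop_eq_getElem_cons hi, List.cons_prefix_cons] at hp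
      exact ⟨by rw [List.getElem?_eq_getElem hi, hp.1], hp.2⟩
    · exfalso
      have : w.drop i = [] := List.drop_eq_nil_iff.2 (by omega)
      rw [this, List.prefix_nil] at hp
      exact List.cons_ne_nil _ _ hp
  · rintro ⟨h1, h2⟩
    have hi : i < w.length := by
      by_contra hi
      rw [List.getElem?_eq_none (by omega)] at h1
      cases h1
    rw [List.drop_eq_getElem_cons hi, List.cons_prefix_cons]
    rw [List.getElem?_eq_getElem hi] at h1
    exact ⟨(Option.some.inj h1).symm, h2⟩

lemma occL_sum (w t : List α) (ht : t ≠ []) (s : Finset α) (hs : ∀ a ∈ w, a ∈ s) :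
    occL w t = ∑ a ∈ s, occ w (a :: t) := by
  have he : ∀ a ∈ s, occ w (a :: t) =
      ((List.range (w.length + 1)).filter (fun i => decide (t <+: w.drop (i + 1)))).countP
        (fun i => decide (w[i]? = some a)) := fun a _ => occ_cons w t a
  rw [Finset.sum_congr rfl he]
  rw [sum_countP_get s (fun i => w[i]?) _ ?_]
  · rw [occL, List.countP_eq_length_filter]
  · intro i hi
    simp only [List.mem_filter, List.mem_range, decide_eq_true_eq] at hi
    have hne : w.drop (i + 1) ≠ [] := by
      intro h
      rw [h, List.prefix_nil] at hi
      exact ht hi.2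
    have hlt : i < w.length := by
      by_contra h
      exact hne (List.drop_eq_nil_iff.2 (by omega))
    exact ⟨w[i], hs _ (List.getElem_mem hlt), List.getElem?_eq_getElem hlt⟩

lemma kab_prefix {k : ℕ} {x y : List α} (h : KAbEq k x y) {t : List α}
    (ht : t ≠ []) (hlen : t.length + 1 ≤ k) (hpre : t <+: x) : t <+: y := by
  set s : Finset α := x.toFinset ∪ y.toFinset with hs
  have hsx : ∀ a ∈ x, a ∈ s := fun a ha => by simp [hs, ha]
  have hsy : ∀ a ∈ y, a ∈ s := fun a ha => by simp [hs, ha]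
  have hLL : occL x t = occL y t := by
    rw [occL_sum x t ht s hsx, occL_sum y t ht s hsy]
    exact Finset.sum_congr rfl fun a _ => h (a :: t) (by simpa using hlen)
  have hocc : occ x t = occ y t := h t (by omega)
  rw [occ_split x t ht, occ_split y t ht, hLL, if_pos hpre] at hocc
  by_contra hny
  rw [if_neg hny] at hocc
  omega

lemma period_ext (f : ℕ → α) (L d i : ℕ) (hL : 0 < L)
    (hper : ∀ r, f (r + L) = f r)
    (hwin : ∀ r, i ≤ r → r < i + L → f (r + d) = f r) :
    ∀ r, f (r + d) = f r := by
  have hper' : ∀ m r, f (r + m * L) = f r := by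
    intro m
    induction m with
    | zero => simp
    | succ m ih =>
      intro r
      have e : r + (m + 1) * L = r + m * L + L := by ring
      rw [e, hper, ih]
  have key : ∀ s, i ≤ s → f (s + d) = f s := by
    intro s
    induction s using Nat.strong_induction_on with
    | _ s ih =>
      intro hs
      by_cases hlt : s < i + L
      · exact hwin s hs hlt
      · have h1 : i ≤ s - L := by omega
        have h2 : s - L < s := by omega
        have ihs := ih (s - L) h2 h1
        have e1 : s + d = s - L + d + L := by omega
        have e2 : s = s - L + L := by omega
        rw [e1, hper, ihs]
        conv_rhs => rw [e2, hper]
  intro r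
  have h1 : i ≤ r + i * L := by
    have := Nat.le_mul_of_pos_right i hL
    omega
  have h2 := key (r + i * L) h1
  have e1 : r + i * L + d = r + d + i * L := by ring
  rw [e1, hper' i (r + d), hper' i r] at h2
  exact h2

lemma W_ext (W : ℕ → α) (u v : List α) (hL : 0 < v.length)
    (hWv : ∀ n : ℕ, W (u.length + n) = v.getD (n % v.length) (W 0))
    {i d : ℕ}
    (hwin : ∀ m, m < u.length + v.length → W (i + m) = W (i + d + m)) :
    ∀ m, W (i + m) = W (i + d + m) := by
  set f : ℕ → α := fun r => W (u.length + r) with hf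
  have hper : ∀ r, f (r + v.length) = f r := by
    intro r
    simp only [hf]
    rw [hWv, hWv, Nat.add_mod_right]
  have hwinf : ∀ r, i ≤ r → r < i + v.length → f (r + d) = f r := by
    intro r h1 h2
    have hw := hwin (u.length + (r - i)) (by omega)
    simp only [hf]
    rw [show u.length + (r + d) = i + d + (u.length + (r - i)) from by omega,
        show u.length + r = i + (u.length + (r - i)) from by omega]
    exact hw.symm
  have key := period_ext f v.length d i hL hper hwinf
  intro m
  by_cases hm : i + m < u.length
  · exact hwin m (by omega)
  · have h1 : i + m = u.length + (i + m - u.length) := by omega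
    have h2 : i + d + m = u.length + (i + m - u.length + d) := by omega
    rw [h1, h2]
    exact (key (i + m - u.length)).symm

end Aux17

/-- If `W = u v^ω` with `v` primitive and `v` not a suffix of `u`, then for
`k = |uv| + 1` any two `k`-abelian equivalent factors of `W` are equal;
consequently the factor complexity of `W` equals its `k`-abelian complexity. -/
theorem stmt17 {α : Type*} [DecidableEq α] (W : ℕ → α) (u v : List α)
    (hv : Primitive v) (hsuf : ¬ v <:+ u)
    (hWu : ∀ n, n < u.length → W n = u.getD n (W 0))
    (hWv : ∀ n : ℕ, W (u.length + n) = v.getD (n % v.length) (W 0)) :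
    (∀ x y : List α, FactorOf x W → FactorOf y W →
      KAbEq (u.length + v.length + 1) x y → x = y) ∧
    ∀ n : ℕ,
      {x : List α | FactorOf x W ∧ x.length = n}.ncard =
      {C : Set (List α) | ∃ x, FactorOf x W ∧ x.length = n ∧
        C = {y | FactorOf y W ∧ y.length = n ∧
              KAbEq (u.length + v.length + 1) x y}}.ncard := by
  have hL : 0 < v.length := List.length_pos_iff.2 hv.1
  have part1 : ∀ x y : List α, FactorOf x W → FactorOf y W →
      KAbEq (u.length + v.length + 1) x y → x = y := by
    intro x y hx hy h
    have hlen : x.length = y.length := by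
      have h0 := h [] (by simp)
      rw [Aux17.occ_nil, Aux17.occ_nil] at h0
      omega
    by_cases hc : x.length ≤ u.length + v.length + 1
    · -- short factors: x occurs in y, same lengths
      have h1 : 0 < occ y x := by
        rw [← h x hc]; exact Aux17.occ_self_pos x
      rw [Aux17.occ_eq_countP, List.countP_pos_iff] at h1
      obtain ⟨i, hi, hp⟩ := h1
      simp only [List.mem_range] at hi
      simp only [decide_eq_true_eq] at hp
      have hlp := hp.length_le
      rw [List.length_drop] at hlp
      rcases Nat.eq_zero_or_pos y.length with h0 | h0
      · have hx0 : x = [] := List.length_eq_zero_iff.1 (by omega)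
        have hy0 : y = [] := List.length_eq_zero_iff.1 (by omega)
        rw [hx0, hy0]
      · have hi0 : i = 0 := by omega
        rw [hi0, List.drop_zero] at hp
        exact hp.eq_of_length hlen
    · push_neg at hc
      obtain ⟨ix, hxe⟩ := hx
      obtain ⟨iy, hye⟩ := hy
      have gx : ∀ m, m < x.length → x[m]? = some (W (ix + m)) := by
        intro m hm
        conv_lhs => rw [hxe]
        rw [List.getElem?_map, List.getElem?_range hm]
        rfl
      have gy : ∀ m, m < y.length → y[m]? = some (W (iy + m)) := by
        intro m hm
        conv_lhs => rw [hye]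
        rw [List.getElem?_map, List.getElem?_range hm]
        rfl
      have htlen : (x.take (u.length + v.length)).length = u.length + v.length := by
        rw [List.length_take]; omega
      have htne : x.take (u.length + v.length) ≠ [] := by
        intro h0
        rw [h0] at htlen
        simp at htlen
        omega
      have hty : x.take (u.length + v.length) <+: y :=
        Aux17.kab_prefix h htne (by omega) (List.take_prefix _ x)
      have hwin : ∀ m, m < u.length + v.length → W (ix + m) = W (iy + m) := by
        intro m hm
        obtain ⟨tx, htx⟩ := List.take_prefix (u.length + v.length) x
        obtain ⟨ty, hty'⟩ := hty
        have e1 : x[m]? = (x.take (u.length + v.length))[m]? := by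
          conv_lhs => rw [← htx]
          rw [List.getElem?_append, if_pos (by omega)]
        have e2 : y[m]? = (x.take (u.length + v.length))[m]? := by
          conv_lhs => rw [← hty']
          rw [List.getElem?_append, if_pos (by omega)]
        have e3 : x[m]? = y[m]? := by rw [e1, ← e2]
        rw [gx m (by omega), gy m (by omega)] at e3
        exact Option.some.inj e3
      have hall : ∀ m, W (ix + m) = W (iy + m) := by
        rcases le_total ix iy with hle | hle
        · have hkey := Aux17.W_ext W u v hL hWv (i := ix) (d := iy - ix)
            (fun m hm => by
              rw [show ix + (iy - ix) + m = iy + m from by omega]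
              exact hwin m hm)
          intro m
          have hk := hkey m
          rwa [show ix + (iy - ix) + m = iy + m from by omega] at hk
        · have hkey := Aux17.W_ext W u v hL hWv (i := iy) (d := ix - iy)
            (fun m hm => by
              rw [show iy + (ix - iy) + m = ix + m from by omega]
              exact (hwin m hm).symm)
          intro m
          have hk := hkey m
          rw [show iy + (ix - iy) + m = ix + m from by omega] at hk
          exact hk.symm
      apply List.ext_getElem?
      intro m
      by_cases hm : m < x.length
      · rw [gx m hm, gy m (by omega), hall m]
      · rw [List.getElem?_eq_none (by omega), List.getElem?_eq_none (by omega)]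
  refine ⟨part1, fun n => ?_⟩
  have hclass : ∀ x, FactorOf x W → x.length = n →
      {y | FactorOf y W ∧ y.length = n ∧ KAbEq (u.length + v.length + 1) x y}
        = ({x} : Set (List α)) := by
    intro x h1 h2
    ext y
    simp only [Set.mem_setOf_eq, Set.mem_singleton_iff]
    constructor
    · rintro ⟨hy1, hy2, hy3⟩
      exact (part1 x y h1 hy1 hy3).symm
    · rintro rfl
      exact ⟨h1, h2, fun t _ => rfl⟩
  have hset : {C : Set (List α) | ∃ x, FactorOf x W ∧ x.length = n ∧
        C = {y | FactorOf y W ∧ y.length = n ∧ KAbEq (u.length + v.length + 1) x y}} =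
      (fun x => ({x} : Set (List α))) '' {x : List α | FactorOf x W ∧ x.length = n} := by
    ext C
    simp only [Set.mem_setOf_eq, Set.mem_image]
    constructor
    · rintro ⟨x, h1, h2, rfl⟩
      exact ⟨x, ⟨h1, h2⟩, (hclass x h1 h2).symm⟩
    · rintro ⟨x, ⟨h1, h2⟩, rfl⟩
      exact ⟨x, h1, h2, (hclass x h1 h2).symm⟩
  rw [hset, Set.ncard_image_of_injective _ Set.singleton_injective]
end

section
/- If w is an aperiodic infinite word, then for every k ≥ 2 there exist two distinct factors of w that are k-abelian equivalent. Hence the factor complexity of an aperiodic infinite word differs from its k-abelian complexity for every k. -/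
/-- The infinite word `W` is ultimately periodic. -/
def UltPeriodic {α : Type*} (W : ℕ → α) : Prop :=
  ∃ N p : ℕ, 0 < p ∧ ∀ n, N ≤ n → W (n + p) = W n

/-! ### Auxiliary material -/

namespace Stmt18Aux

variable {α : Type*}

/-- The factor of `W` of length `n` starting at position `i`. -/
def seg (W : ℕ → α) (i n : ℕ) : List α := (List.range n).map fun j => W (i + j)

@[simp] lemma seg_length (W : ℕ → α) (i n : ℕ) : (seg W i n).length = n := by simp [seg]

lemma factorOf_seg (W : ℕ → α) (i n : ℕ) : FactorOf (seg W i n) W :=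
  ⟨i, by simp [seg]⟩

lemma seg_append (W : ℕ → α) (i m n : ℕ) :
    seg W i (m + n) = seg W i m ++ seg W (i + m) n := by
  simp [seg, List.range_add, Function.comp, Nat.add_assoc]

lemma seg_take (W : ℕ → α) (i n j : ℕ) :
    (seg W i n).take j = seg W i (min j n) := by
  simp [seg, ← List.map_take, List.take_range]

lemma seg_congr {W W' : ℕ → α} {i i' n : ℕ} (h : ∀ s < n, W (i + s) = W' (i' + s)) :
    seg W i n = seg W' i' n := by
  unfold seg
  apply List.map_congr_left
  intro a ha
  exact h a (List.mem_range.mp ha)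

lemma seg_getElem? (W : ℕ → α) (i n s : ℕ) :
    (seg W i n)[s]? = if s < n then some (W (i + s)) else none := by
  rcases lt_or_ge s n with h | h
  · simp [seg, List.getElem?_map, List.getElem?_range h, h]
  · simp [seg, List.getElem?_map, h, List.getElem?_eq_none, Nat.not_lt.2 h]

/-! ### The occurrence-counting swap lemma -/

variable [DecidableEq α]

lemma occ_eq_card (w t : List α) :
    occ w t = ((Finset.range (w.length + 1)).filter (fun i => t <+: w.drop i)).card := rfl

lemma getElem?_of_prefix {x l : List α} (h : x <+: l) {s : ℕ} (hs : s < x.length) :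
    l[s]? = x[s]? := by
  obtain ⟨u, rfl⟩ := h
  exact List.getElem?_append_left hs

/-- The position bijection used to compare occurrences in `A ++ B ++ x` and
`B ++ A ++ x`. -/
def phi (m n L ℓ i : ℕ) : ℕ :=
  if L < i + ℓ then i else if i < m then i + n else if i < m + n then i - m else i

lemma phi_le {m n r L ℓ i : ℕ} (hL : L = m + n + r) (hi : i ≤ L) :
    phi m n L ℓ i ≤ L := by
  unfold phi; split_ifs <;> omega

lemma phi_inv {m n r L ℓ i : ℕ} (hL : L = m + n + r) (hℓ : ℓ ≤ r + 1) (hi : i ≤ L) :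
    phi n m L ℓ (phi m n L ℓ i) = i := by
  unfold phi; split_ifs <;> omega

lemma w1_getElem? {x A B : List α} (hB : x <+: B ++ x) {s : ℕ}
    (hs : s < A.length + x.length) :
    (A ++ B ++ x)[s]? = (A ++ x)[s]? := by
  rw [List.append_assoc]
  rcases lt_or_ge s A.length with h | h
  · rw [List.getElem?_append_left h, List.getElem?_append_left h]
  · rw [List.getElem?_append_right h, List.getElem?_append_right h,
      getElem?_of_prefix hB (by omega)]

lemma w1_getElem?' (x A B : List α) (s : ℕ) :
    (A ++ B ++ x)[A.length + s]? = (B ++ x)[s]? := by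
  rw [List.append_assoc, List.getElem?_append_right (Nat.le_add_right _ _),
    Nat.add_sub_cancel_left]

/-- Key window-transport lemma. -/
lemma window {x A B t : List α} (hA : x <+: A ++ x) (hB : x <+: B ++ x)
    (ht : t.length ≤ x.length + 1) {L i : ℕ}
    (hL : L = A.length + B.length + x.length) (hi : i ≤ L) :
    (t <+: (A ++ B ++ x).drop i ↔
      t <+: (B ++ A ++ x).drop (phi A.length B.length L t.length i)) := by
  set m := A.length with hm
  set n := B.length with hn
  set r := x.length with hr
  set ℓ := t.length with hℓ
  have hlen1 : (A ++ B ++ x).length = L := by simp [hL]; omega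
  have hlen2 : (B ++ A ++ x).length = L := by simp [hL]; omega
  by_cases hc : L < i + ℓ
  · have hphi : phi m n L ℓ i = i := by unfold phi; rw [if_pos hc]
    rw [hphi]
    constructor <;> intro h <;> have h' := h.length_le <;>
      rw [List.length_drop] at h' <;> omega
  · push_neg at hc
    have hphi_le : phi m n L ℓ i ≤ L := phi_le hL hi
    have key : ∀ s < ℓ, (A ++ B ++ x)[i + s]? = (B ++ A ++ x)[phi m n L ℓ i + s]? := by
      intro s hs
      unfold phi
      rw [if_neg (by omega)]
      by_cases h1 : i < m
      · rw [if_pos h1]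
        have hlt : i + s < m + r := by omega
        rw [w1_getElem? hB hlt]
        have e : i + n + s = n + (i + s) := by omega
        rw [e, w1_getElem?' x B A (i + s)]
      · rw [if_neg h1]
        by_cases h2 : i < m + n
        · rw [if_pos h2]
          have e1 : i + s = m + (i - m + s) := by omega
          rw [e1, w1_getElem?' x A B (i - m + s)]
          have hlt : i - m + s < n + r := by omega
          have e2 : i - m + s = (i - m) + s := rfl
          exact (w1_getElem? hA hlt).symm
        · rw [if_neg h2]
          have e1 : i + s = m + (n + (i - m - n + s)) := by omega
          have e2 : i + s = n + (m + (i - m - n + s)) := by omega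
          rw [show (A ++ B ++ x)[i + s]? = (A ++ B ++ x)[m + (n + (i - m - n + s))]? by
                rw [← e1],
            w1_getElem?' x A B, List.getElem?_append_right (by omega),
            show (B ++ A ++ x)[i + s]? = (B ++ A ++ x)[n + (m + (i - m - n + s))]? by
                rw [← e2],
            w1_getElem?' x B A, List.getElem?_append_right (by omega)]
          congr 1
          omega
    have htake : ((A ++ B ++ x).drop i).take ℓ =
        ((B ++ A ++ x).drop (phi m n L ℓ i)).take ℓ := by
      apply List.ext_getElem?
      intro s
      simp only [List.getElem?_take, List.getElem?_drop]
      split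
      · exact key s ‹_›
      · rfl
    rw [List.prefix_iff_eq_take, List.prefix_iff_eq_take, ← hℓ, htake]

/-- The central combinatorial lemma: if `x` is a prefix of both `A ++ x` and
`B ++ x`, then `A ++ B ++ x` and `B ++ A ++ x` have the same number of
occurrences of every word of length at most `|x| + 1`. -/
lemma occ_swap {x A B : List α} (t : List α) (hA : x <+: A ++ x) (hB : x <+: B ++ x)
    (ht : t.length ≤ x.length + 1) :
    occ (A ++ B ++ x) t = occ (B ++ A ++ x) t := by
  set m := A.length with hm
  set n := B.length with hn
  set r := x.length with hr
  set ℓ := t.length with hℓ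
  set L := m + n + r with hLdef
  have hL1 : L = A.length + B.length + x.length := rfl
  have hL2 : L = B.length + A.length + x.length := by rw [hL1]; omega
  have hlen1 : (A ++ B ++ x).length = L := by simp [hL1]; omega
  have hlen2 : (B ++ A ++ x).length = L := by simp [hL2]; omega
  rw [occ_eq_card, occ_eq_card, hlen1, hlen2]
  refine Finset.card_bij' (fun i _ => phi m n L ℓ i) (fun i _ => phi n m L ℓ i) ?_ ?_ ?_ ?_
  · intro i hi
    simp only [Finset.mem_filter, Finset.mem_range] at hi ⊢
    obtain ⟨hir, hpre⟩ := hi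
    have hi' : i ≤ L := by omega
    have hp := phi_le (r := r) (ℓ := ℓ) hLdef hi'
    exact ⟨by omega, (window hA hB ht hL1 hi').mp hpre⟩
  · intro i hi
    simp only [Finset.mem_filter, Finset.mem_range] at hi ⊢
    obtain ⟨hir, hpre⟩ := hi
    have hi' : i ≤ L := by omega
    have hLmn : L = n + m + r := by omega
    have hp := phi_le (r := r) (ℓ := ℓ) hLmn hi'
    exact ⟨by omega, (window hB hA ht hL2 hi').mp hpre⟩
  · intro i hi
    rw [Finset.mem_filter, Finset.mem_range] at hi
    exact phi_inv hLdef ht (by omega)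
  · intro i hi
    rw [Finset.mem_filter, Finset.mem_range] at hi
    exact phi_inv (by omega) ht (by omega)

end Stmt18Aux

open Stmt18Aux

/-- If `W` is aperiodic, then for every `k ≥ 2` there are two distinct
`k`-abelian equivalent factors of `W` of the same length. -/
theorem stmt18_pair {α : Type*} [DecidableEq α] [Fintype α] (W : ℕ → α)
    (hW : ¬ UltPeriodic W) (k : ℕ) (hk : 2 ≤ k) :
    ∃ F1 F2 : List α, FactorOf F1 W ∧ FactorOf F2 W ∧ F1 ≠ F2 ∧
      F1.length = F2.length ∧ KAbEq k F1 F2 := by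
  classical
  obtain ⟨r, rfl⟩ : ∃ r, r + 1 = k := ⟨k - 1, by omega⟩
  have hr : 1 ≤ r := by omega
  set N := Fintype.card (Fin r → α) with hN
  set L := r * (N + 1) with hLdef
  -- an infinitely recurring word of length L
  obtain ⟨u, hu⟩ := Finite.exists_infinite_fiber (fun (i : ℕ) (s : Fin L) => W (i + s))
  set S : Set ℕ := (fun (i : ℕ) (s : Fin L) => W (i + s)) ⁻¹' {u} with hSdef
  have hS : S.Infinite := Set.infinite_coe_iff.mp hu
  have hshare : ∀ q ∈ S, ∀ q' ∈ S, ∀ s < L, W (q + s) = W (q' + s) := by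
    intro q hq q' hq' s hs
    have h1 : (fun (s : Fin L) => W (q + s)) = u := hq
    have h2 : (fun (s : Fin L) => W (q' + s)) = u := hq'
    exact congrFun (h1.trans h2.symm) ⟨s, hs⟩
  obtain ⟨i₀, hi₀⟩ := hS.nonempty
  -- two equal blocks of length r inside the recurring word
  have hblocks : ∃ a b : Fin (N + 1), (a : ℕ) < b ∧
      (fun s : Fin r => W (i₀ + ((a : ℕ) * r + s))) =
      (fun s : Fin r => W (i₀ + ((b : ℕ) * r + s))) := by
    obtain ⟨a, b, hab, hg⟩ := Fintype.exists_ne_map_eq_of_card_lt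
      (fun (j : Fin (N + 1)) (s : Fin r) => W (i₀ + ((j : ℕ) * r + s)))
      (by rw [Fintype.card_fin]; omega)
    rcases lt_or_gt_of_ne (fun h => hab (Fin.ext h) : (a : ℕ) ≠ (b : ℕ)) with h | h
    · exact ⟨a, b, h, hg⟩
    · exact ⟨b, a, h, hg.symm⟩
  obtain ⟨a, b, hab, hg⟩ := hblocks
  have hbN : (b : ℕ) ≤ N := by omega
  set i₁ := i₀ + (a : ℕ) * r with hi₁
  set m := ((b : ℕ) - (a : ℕ)) * r with hmdef
  have hm_eq : (a : ℕ) * r + m = (b : ℕ) * r := by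
    rw [hmdef, ← Nat.add_mul]
    congr 1
    omega
  have hmr : r ≤ m := by
    calc r = 1 * r := (one_mul r).symm
    _ ≤ ((b : ℕ) - (a : ℕ)) * r := Nat.mul_le_mul_right r (by omega)
  have hm : 1 ≤ m := le_trans hr hmr
  have hbound : (a : ℕ) * r + (m + r) ≤ L := by
    have hb : (b : ℕ) * r + r ≤ L := by
      rw [hLdef]
      calc (b : ℕ) * r + r = ((b : ℕ) + 1) * r := by ring
      _ ≤ (N + 1) * r := Nat.mul_le_mul_right r (by omega)
      _ = r * (N + 1) := Nat.mul_comm _ _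
    omega
  set A := seg W i₁ m with hAdef
  set x := seg W i₁ r with hxdef
  have hAlen : A.length = m := seg_length _ _ _
  have hxlen : x.length = r := seg_length _ _ _
  -- x is a prefix of A
  have hxA : x <+: A := by
    have h : A.take r = x := by
      rw [hAdef, hxdef, seg_take]
      congr 1
      omega
    exact h ▸ List.take_prefix r A
  have hAx : x <+: A ++ x := hxA.trans (List.prefix_append A x)
  -- the periodic return: W (i₁ + m + s) = W (i₁ + s) for s < r
  have hFx : ∀ s < r, W (i₁ + m + s) = W (i₁ + s) := by
    intro s hs
    have e1 : i₁ + m + s = i₀ + ((b : ℕ) * r + s) := by omega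
    have e2 : i₁ + s = i₀ + ((a : ℕ) * r + s) := by omega
    have h := congrFun hg ⟨s, hs⟩
    simp only at h
    rw [e1, e2, ← h]
  -- sharing along S, shifted by a*r
  have hFq : ∀ q ∈ S, ∀ s < m + r, W (q + (a : ℕ) * r + s) = W (i₁ + s) := by
    intro q hq s hs
    have h1 : W (q + ((a : ℕ) * r + s)) = W (i₀ + ((a : ℕ) * r + s)) :=
      hshare q hq i₀ hi₀ _ (by omega)
    have e1 : q + (a : ℕ) * r + s = q + ((a : ℕ) * r + s) := by omega
    have e2 : i₁ + s = i₀ + ((a : ℕ) * r + s) := by omega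
    rw [e1, e2, h1]
  by_cases hcase : ∀ q ∈ S, i₀ + m ≤ q →
      A ++ seg W (i₁ + m) (q - i₀ - m) = seg W (i₁ + m) (q - i₀ - m) ++ A
  · -- all gaps commute: W is ultimately periodic, contradiction
    exfalso
    apply hW
    refine ⟨i₁, m, hm, ?_⟩
    intro n hn
    obtain ⟨q, hqS, hq⟩ := hS.exists_gt (max n (i₀ + m))
    have hq1 : i₀ + m ≤ q := by omega
    have hq2 : n < q := by omega
    set D := q - i₀ with hDdef
    have hDm : m ≤ D := by omega
    set B := seg W (i₁ + m) (D - m) with hBdef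
    have hAB : A ++ B = B ++ A := hcase q hqS hq1
    have hseg1 : seg W i₁ D = A ++ B := by
      rw [show D = m + (D - m) by omega, seg_append, hAdef, hBdef]
    have hiD : i₁ + D = q + (a : ℕ) * r := by omega
    have hseg2 : seg W (i₁ + D) m = A := by
      rw [hAdef]
      apply seg_congr
      intro s hs
      rw [hiD]
      exact hFq q hqS s (by omega)
    have hseg3 : seg W i₁ (D + m) = A ++ (A ++ B) := by
      rw [seg_append, hseg1, hseg2, List.append_assoc, hAB]
    set d := n - i₁ with hddef
    have hdD : d < D := by omega
    have e1 : (seg W i₁ (D + m))[m + d]? = some (W (i₁ + (m + d))) := by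
      rw [seg_getElem?, if_pos (by omega)]
    have e2 : (A ++ (A ++ B))[m + d]? = (A ++ B)[d]? := by
      rw [List.getElem?_append_right (by omega)]
      congr 1
      omega
    have e3 : (A ++ B)[d]? = some (W (i₁ + d)) := by
      rw [← hseg1, seg_getElem?, if_pos hdD]
    rw [hseg3, e2, e3] at e1
    have hW' : W (i₁ + (m + d)) = W (i₁ + d) := by
      injection e1.symm
    rw [show n + m = i₁ + (m + d) by omega, show n = i₁ + d by omega, hW']
  · -- a non-commuting gap: produce the two factors
    push_neg at hcase
    obtain ⟨q, hqS, hq1, hne⟩ := hcase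
    set D := q - i₀ with hDdef
    have hDm : m ≤ D := by omega
    set B := seg W (i₁ + m) (D - m) with hBdef
    have hBlen : B.length = D - m := seg_length _ _ _
    have hiD : i₁ + D = q + (a : ℕ) * r := by omega
    -- x also sits at positions i₁ + D, i₁ + m and i₁ + D + m
    have hx2 : seg W (i₁ + D) r = x := by
      rw [hxdef]
      apply seg_congr
      intro s hs
      rw [hiD]
      exact hFq q hqS s (by omega)
    have hx3 : seg W (i₁ + m) r = x := by
      rw [hxdef]
      apply seg_congr
      intro s hs
      exact hFx s hs
    have hA2 : seg W (i₁ + D) m = A := by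
      rw [hAdef]
      apply seg_congr
      intro s hs
      rw [hiD]
      exact hFq q hqS s (by omega)
    have hx4 : seg W (i₁ + D + m) r = x := by
      rw [hxdef]
      apply seg_congr
      intro s hs
      rw [show i₁ + D + m + s = q + (a : ℕ) * r + (m + s) by omega,
        hFq q hqS (m + s) (by omega), show i₁ + (m + s) = i₁ + m + s by omega]
      exact hFx s hs
    have hseg1 : seg W i₁ D = A ++ B := by
      rw [show D = m + (D - m) by omega, seg_append, hAdef, hBdef]
    have hF1seg : seg W i₁ (D + r) = A ++ B ++ x := by
      rw [seg_append, hseg1, hx2]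
    have hF2seg : seg W (i₁ + m) ((D - m) + (m + r)) = B ++ (A ++ x) := by
      rw [seg_append, hBdef]
      congr 1
      rw [show i₁ + m + (D - m) = i₁ + D by omega, seg_append, hA2, hx4]
    -- x is a prefix of B ++ x
    have hBx : B ++ x = seg W (i₁ + m) ((D - m) + r) := by
      rw [seg_append, hBdef]
      congr 1
      rw [show i₁ + m + (D - m) = i₁ + D by omega, hx2]
    have hxBx : x <+: B ++ x := by
      rw [List.prefix_iff_eq_take, hxlen, hBx, seg_take,
        show min r (D - m + r) = r by omega, hx3]
    refine ⟨A ++ B ++ x, B ++ A ++ x, ?_, ?_, ?_, ?_, ?_⟩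
    · rw [← hF1seg]
      exact factorOf_seg W i₁ (D + r)
    · rw [show B ++ A ++ x = B ++ (A ++ x) from List.append_assoc B A x, ← hF2seg]
      exact factorOf_seg W (i₁ + m) ((D - m) + (m + r))
    · intro h
      exact hne (List.append_cancel_right h)
    · simp only [List.length_append]
      omega
    · intro t ht
      exact occ_swap t hAx hxBx (by omega)

/-- If `W` is aperiodic, then for every `k ≥ 2` there are two distinct
`k`-abelian equivalent factors of `W`; hence the factor complexity differs
from the `k`-abelian complexity for every `k ≥ 2`. -/
theorem stmt18 {α : Type*} [DecidableEq α] [Fintype α] (W : ℕ → α)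
    (hW : ¬ UltPeriodic W) :
    ∀ k : ℕ, 2 ≤ k →
      (∃ x y : List α, FactorOf x W ∧ FactorOf y W ∧ x ≠ y ∧ KAbEq k x y) ∧
      ∃ n : ℕ,
        {x : List α | FactorOf x W ∧ x.length = n}.ncard ≠
        {C : Set (List α) | ∃ x, FactorOf x W ∧ x.length = n ∧
          C = {y | FactorOf y W ∧ y.length = n ∧ KAbEq k x y}}.ncard := by
  intro k hk
  obtain ⟨F1, F2, h1, h2, hne, hlen, heq⟩ := stmt18_pair W hW k hk
  refine ⟨⟨F1, F2, h1, h2, hne, heq⟩, F1.length, ?_⟩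
  set n := F1.length with hn
  set Fn : Set (List α) := {x | FactorOf x W ∧ x.length = n} with hFn
  set cls : List α → Set (List α) :=
    fun x => {y | FactorOf y W ∧ y.length = n ∧ KAbEq k x y} with hcls
  have hfin : Fn.Finite :=
    (List.finite_length_eq α n).subset (fun x hx => hx.2)
  have hset : {C : Set (List α) | ∃ x, FactorOf x W ∧ x.length = n ∧ C = cls x} =
      cls '' Fn := by
    ext C
    constructor
    · rintro ⟨y, hy, hyl, rfl⟩
      exact ⟨y, ⟨hy, hyl⟩, rfl⟩
    · rintro ⟨y, ⟨hy, hyl⟩, rfl⟩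
      exact ⟨y, hy, hyl, rfl⟩
  have hclseq : cls F1 = cls F2 := by
    ext y
    simp only [hcls, Set.mem_setOf_eq]
    constructor <;> rintro ⟨hy1, hy2, hy3⟩ <;> refine ⟨hy1, hy2, fun t ht => ?_⟩
    · rw [← heq t ht]
      exact hy3 t ht
    · rw [heq t ht]
      exact hy3 t ht
  have hF1 : F1 ∈ Fn := ⟨h1, rfl⟩
  have hF2 : F2 ∈ Fn := ⟨h2, hlen.symm⟩
  have himg : cls '' Fn = cls '' (Fn \ {F1}) := by
    apply Set.Subset.antisymm
    · rintro C ⟨y, hy, rfl⟩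
      by_cases hy1 : y = F1
      · exact ⟨F2, ⟨hF2, fun h => hne (Set.mem_singleton_iff.mp h).symm⟩,
          by rw [hy1, hclseq]⟩
      · exact ⟨y, ⟨hy, hy1⟩, rfl⟩
    · exact Set.image_mono Set.diff_subset
  rw [hset, himg]
  have hle : (cls '' (Fn \ {F1})).ncard ≤ (Fn \ {F1}).ncard :=
    Set.ncard_image_le hfin.diff
  have hlt : (Fn \ {F1}).ncard < Fn.ncard :=
    Set.ncard_diff_singleton_lt_of_mem hF1 hfin
  exact (lt_of_le_of_lt hle hlt).ne'
end
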